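/- arXiv:2412.05999 — 4 statements merged into one kernel-verified Lean document; each statement's English description precedes it below -/
import Mathlib

section
/- Let A be an m×m alternating matrix over F. Then there exist a matrix U ∈ GL_m(𝔬), an integer r with 2r ≤ m, and integers λ_1 ≥ λ_2 ≥ … ≥ λ_r, such that U·A·Uᵀ is the block-diagonal matrix diag(J(λ_1), J(λ_2), …, J(λ_r), 0), where the final block is the (m−2r)×(m−2r) zero matrix. Moreover, if m is even and det A ≠ 0, then necessarily 2r = m. -/
/-- The block-diagonal matrix `diag(J(λ₁), …, J(λ_r), 0)` of size `m × m`, where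
`J(d) = [[0, π^d], [−π^d, 0]]` and the final block is the `(m − 2r) × (m − 2r)` zero matrix.
For `0 ≤ l < r`, block `l` occupies rows and columns `2l, 2l+1`. -/
noncomputable def altBlockDiag {F : Type} [Field F] (π : F) (m r : ℕ) (lam : ℕ → ℤ) :
    Matrix (Fin m) (Fin m) F :=
  Matrix.of fun i j =>
    if i.val + 1 = j.val ∧ j.val < 2 * r ∧ i.val % 2 = 0 then π ^ lam (i.val / 2)
    else if j.val + 1 = i.val ∧ i.val < 2 * r ∧ j.val % 2 = 0 then -π ^ lam (j.val / 2)
    else 0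

/-!
Induction on `m`. If `A ≠ 0`, take an entry `a` of minimal valuation `d`; it is off the diagonal,
so a permutation moves it to position `(0, 1)`. All entries of the first two columns are then
divisible by `a`, so the Schur-complement factorisation `A = L · diag(J, S) · Lᵀ` against the pivot
block `J = [[0, a], [-a, 0]]` has `L ∈ GL_m(𝔬)`, and rescaling by the unit `π^d / a` turns `J`
into `J(d)`. The Schur complement `S` is alternating of size `m - 2`. A permutation of the `2 × 2`
blocks then sorts the exponents. If `2r < m`, the normal form has a zero row, so `det A = 0`.
-/

open Matrix

section Alternating

variable {R : Type*} [CommRing R] {ι κ : Type*}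

def IsAlternating (A : Matrix ι ι R) : Prop := Aᵀ = -A ∧ ∀ i, A i i = 0

namespace IsAlternating

variable {A : Matrix ι ι R}

theorem apply_swap (hA : IsAlternating A) (i j : ι) : A j i = -A i j := by
  simpa using congrFun (congrFun hA.1 i) j

theorem submatrix (hA : IsAlternating A) (e : κ → ι) : IsAlternating (A.submatrix e e) :=
  ⟨by rw [transpose_submatrix, hA.1]; rfl, fun i => hA.2 (e i)⟩

-- The terms `x k * A k l * x l` cancel in pairs under `(k, l) ↦ (l, k)`; the fixed points vanish.
theorem dotProduct_mulVec_self [Fintype ι] (hA : IsAlternating A) (x : ι → R) :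
    x ⬝ᵥ A *ᵥ x = 0 := by
  simp only [dotProduct, mulVec, Finset.mul_sum, ← Finset.sum_product']
  refine Finset.sum_involution (fun p _ => p.swap) (fun p _ => ?_) (fun p _ hp hswap => ?_)
    (fun p _ => Finset.mem_univ _) (fun p _ => rfl)
  · rw [Prod.fst_swap, Prod.snd_swap, hA.apply_swap p.1 p.2]; ring
  · exact hp (by rw [show p.2 = p.1 from congrArg Prod.fst hswap, hA.2]; ring)

theorem mul_mul_transpose [Fintype ι] (hA : IsAlternating A) (U : Matrix κ ι R) :
    IsAlternating (U * A * Uᵀ) := by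
  refine ⟨by simp [transpose_mul, hA.1, Matrix.mul_assoc], fun i => ?_⟩
  rw [← hA.dotProduct_mulVec_self (U i), Matrix.mul_assoc, mul_apply]
  simp only [mul_apply, transpose_apply, Finset.mul_sum, dotProduct, mulVec]

end IsAlternating

end Alternating

section Congruence

variable {R : Type*} [CommRing R] (O : Subring R) {ι κ : Type*} [Fintype ι] [DecidableEq ι]
  [Fintype κ] [DecidableEq κ]

def CongruentOver (A B : Matrix ι ι R) : Prop :=
  ∃ U : Matrix ι ι O, IsUnit U ∧ U.map O.subtype * A * (U.map O.subtype)ᵀ = B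

variable {O}

namespace CongruentOver

theorem refl (A : Matrix ι ι R) : CongruentOver O A A :=
  ⟨1, isUnit_one, by simp⟩

theorem trans {A B C : Matrix ι ι R} (hAB : CongruentOver O A B) (hBC : CongruentOver O B C) :
    CongruentOver O A C := by
  obtain ⟨U, hU, rfl⟩ := hAB
  obtain ⟨V, hV, rfl⟩ := hBC
  refine ⟨V * U, hV.mul hU, ?_⟩
  simp only [Matrix.map_mul, transpose_mul, Matrix.mul_assoc]

theorem submatrix {A B : Matrix ι ι R} (h : CongruentOver O A B) (e : κ ≃ ι) :
    CongruentOver O (A.submatrix e e) (B.submatrix e e) := by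
  obtain ⟨U, hU, rfl⟩ := h
  refine ⟨U.submatrix e e, hU.map (reindexAlgEquiv O O e.symm), ?_⟩
  rw [← submatrix_map, transpose_submatrix, submatrix_mul_equiv, submatrix_mul_equiv]

theorem fromBlocks_zero {A B : Matrix ι ι R} {C D : Matrix κ κ R} (hAB : CongruentOver O A B)
    (hCD : CongruentOver O C D) :
    CongruentOver O (fromBlocks A 0 0 C) (fromBlocks B 0 0 D) := by
  obtain ⟨U, hU, rfl⟩ := hAB
  obtain ⟨V, hV, rfl⟩ := hCD
  refine ⟨fromBlocks U 0 0 V, ?_, ?_⟩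
  · rw [isUnit_iff_isUnit_det, det_fromBlocks_zero₂₁]
    exact ((isUnit_iff_isUnit_det U).1 hU).mul ((isUnit_iff_isUnit_det V).1 hV)
  · simp [fromBlocks_map, fromBlocks_transpose, fromBlocks_multiply]

theorem symm {A B : Matrix ι ι R} (h : CongruentOver O A B) : CongruentOver O B A := by
  obtain ⟨_, ⟨U, rfl⟩, rfl⟩ := h
  have hU : (↑U⁻¹ : Matrix ι ι O).map O.subtype * (↑U : Matrix ι ι O).map O.subtype = 1 := by
    rw [← Matrix.map_mul, U.inv_mul, Matrix.map_one _ (map_zero _) (map_one _)]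
  refine ⟨↑U⁻¹, U⁻¹.isUnit, ?_⟩
  rw [← Matrix.mul_assoc, ← Matrix.mul_assoc, hU, Matrix.one_mul, Matrix.mul_assoc,
    ← transpose_mul, hU, transpose_one, Matrix.mul_one]

theorem det_ne_zero {A B : Matrix ι ι R} (h : CongruentOver O A B) (hA : A.det ≠ 0) :
    B.det ≠ 0 := by
  obtain ⟨U, hU, rfl⟩ := h
  have hdet : IsUnit (U.map O.subtype).det := by
    rw [← RingHom.mapMatrix_apply, ← RingHom.map_det]
    exact ((isUnit_iff_isUnit_det U).1 hU).map O.subtype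
  rw [det_mul, det_mul, det_transpose, hdet.mul_left_eq_zero.ne, hdet.mul_right_eq_zero.ne]
  exact hA

end CongruentOver

theorem congruentOver_submatrix (A : Matrix ι ι R) (σ : Equiv.Perm ι) :
    CongruentOver O A (A.submatrix σ σ) := by
  refine ⟨σ.permMatrix O, ?_, ?_⟩
  · rw [isUnit_iff_isUnit_det, det_permutation]
    exact (Equiv.Perm.sign σ).isUnit.map (Int.castRingHom O)
  · rw [PEquiv.map_toMatrix, transpose_permMatrix, PEquiv.toMatrix_toPEquiv_mul,
      PEquiv.mul_toMatrix_toPEquiv]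
    rfl

theorem IsAlternating.of_congruentOver {A B : Matrix ι ι R} (hA : IsAlternating A)
    (h : CongruentOver O A B) : IsAlternating B := by
  obtain ⟨U, -, rfl⟩ := h
  exact hA.mul_mul_transpose _

end Congruence

theorem AddValuation.add_le_map_mul_apply {R Γ₀ : Type*} [Ring R]
    [LinearOrderedAddCommMonoidWithTop Γ₀] (w : AddValuation R Γ₀) {ι κ μ : Type*} [Fintype κ]
    {M : Matrix ι κ R} {N : Matrix κ μ R} {a b : Γ₀} (hM : ∀ i k, a ≤ w (M i k))
    (hN : ∀ k j, b ≤ w (N k j)) (i : ι) (j : μ) : a + b ≤ w ((M * N) i j) :=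
  w.map_le_sum fun k _ => (w.map_mul _ _).symm ▸ add_le_add (hM i k) (hN k j)

section Valuation

variable {F : Type*} [Field F] {w : AddValuation F (WithTop ℤ)} {O : Subring F}

def altPair (a : F) : Matrix (Fin 2) (Fin 2) F := !![0, a; -a, 0]

theorem AddValuation.map_zpow_of_eq_one {π : F} (hπ : w π = 1) (d : ℤ) : w (π ^ d) = d := by
  cases d with
  | ofNat n => simp [w.map_pow, hπ]
  | negSucc n =>
    rw [zpow_negSucc, w.map_inv, w.map_pow, hπ, nsmul_one, Int.negSucc_eq]
    norm_cast

theorem isUnit_of_addValuation_eq_zero (hO : ∀ x, x ∈ O ↔ 0 ≤ w x) {x : O} (hx : w x = 0) :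
    IsUnit x := by
  have hx0 : (x : F) ≠ 0 := by simp [← w.top_iff, hx]
  exact .of_mul_eq_one ⟨(x : F)⁻¹, (hO _).2 (by simp [w.map_inv, hx])⟩
    (Subtype.ext (mul_inv_cancel₀ hx0))

theorem exists_min_addValuation_apply (w : AddValuation F (WithTop ℤ)) {ι κ : Type*} [Finite ι]
    [Finite κ] {A : Matrix ι κ F} (hA : A ≠ 0) :
    ∃ i j, ∃ d : ℤ, w (A i j) = d ∧ ∀ k l, (d : WithTop ℤ) ≤ w (A k l) := by
  obtain ⟨i, j, hij⟩ : ∃ i j, A i j ≠ 0 := by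
    by_contra! h
    exact hA (ext h)
  have : Nonempty (ι × κ) := ⟨(i, j)⟩
  obtain ⟨⟨i', j'⟩, hmin⟩ := Finite.exists_min fun p : ι × κ => w (A p.1 p.2)
  obtain ⟨d, hd⟩ := WithTop.ne_top_iff_exists.1
    (ne_top_of_le_ne_top (w.ne_top_iff.2 hij) (hmin (i, j)))
  exact ⟨i', j', d, hd.symm, fun k l => hd ▸ hmin (k, l)⟩

theorem congruentOver_altPair (hO : ∀ x, x ∈ O ↔ 0 ≤ w x) {π a : F} (hπ : w π = 1) {d : ℤ}
    (ha : w a = d) : CongruentOver O (altPair a) (altPair (π ^ d)) := by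
  have ha0 : a ≠ 0 := by simp [← w.top_iff, ha]
  have hc : w (π ^ d * a⁻¹) = 0 := by
    rw [w.map_mul, w.map_inv, ha, w.map_zpow_of_eq_one hπ]
    norm_cast
    simp
  set c : O := ⟨π ^ d * a⁻¹, (hO _).2 hc.ge⟩
  refine ⟨diagonal ![c, 1], ?_, ?_⟩
  · rw [isUnit_iff_isUnit_det, det_diagonal, Fin.prod_univ_two]
    simpa using isUnit_of_addValuation_eq_zero hO hc
  · ext i j
    fin_cases i <;> fin_cases j <;> simp [altPair, c, ha0, mul_left_comm a]

variable {ι : Type*} [Fintype ι] [DecidableEq ι]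

-- `C = L · diag(J, S) · Lᵀ` with `J = altPair a` and `L = [[1, 0], [C₂₁ J⁻¹, 1]]`, which is integral
-- since the entries of `J⁻¹` have valuation `-d`.
theorem exists_congruentOver_fromBlocks_altPair (hO : ∀ x, x ∈ O ↔ 0 ≤ w x) {a : F} {d : ℤ}
    (ha : w a = d) {C : Matrix (Fin 2 ⊕ ι) (Fin 2 ⊕ ι) F} (hC : IsAlternating C)
    (h₁₁ : C.toBlocks₁₁ = altPair a) (h₂₁ : ∀ i j, (d : WithTop ℤ) ≤ w (C.toBlocks₂₁ i j)) :
    ∃ S : Matrix ι ι F, IsAlternating S ∧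
      CongruentOver O C (fromBlocks (altPair a) 0 0 S) := by
  have ha0 : a ≠ 0 := by simp [← w.top_iff, ha]
  set K : Matrix (Fin 2) (Fin 2) F := !![0, -a⁻¹; a⁻¹, 0]
  let _ : Invertible C.toBlocks₁₁ :=
    ⟨K, by ext i j; fin_cases i <;> fin_cases j <;> simp [altPair, K, h₁₁, ha0],
      by ext i j; fin_cases i <;> fin_cases j <;> simp [altPair, K, h₁₁, ha0]⟩
  have hK : ∀ s t, ((-d : ℤ) : WithTop ℤ) ≤ w (K s t) := by
    intro s t; fin_cases s <;> fin_cases t <;> simp [K, w.map_inv, ha]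
  have hX : ∀ i j, (C.toBlocks₂₁ * K) i j ∈ O := fun i j =>
    (hO _).2 (by simpa using w.add_le_map_mul_apply h₂₁ hK i j)
  set L : Matrix (Fin 2 ⊕ ι) (Fin 2 ⊕ ι) O := fromBlocks 1 0 (.of fun i j => ⟨_, hX i j⟩) 1
  have hL : L.map O.subtype = fromBlocks 1 0 (C.toBlocks₂₁ * ⅟C.toBlocks₁₁) 1 := by
    simp only [L, fromBlocks_map, Matrix.map_one _ (map_zero _) (map_one _),
      Matrix.map_zero _ (map_zero _)]
    rfl
  have hKC : ⅟C.toBlocks₁₁ * C.toBlocks₁₂ = (C.toBlocks₂₁ * ⅟C.toBlocks₁₁)ᵀ := by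
    have hKt : Kᵀ = -K := by ext i j; fin_cases i <;> fin_cases j <;> simp [K]
    have h₁₂ : C.toBlocks₂₁ᵀ = -C.toBlocks₁₂ := by
      ext i j; simp [toBlocks₁₂, toBlocks₂₁, hC.apply_swap (Sum.inl i)]
    rw [transpose_mul, h₁₂]
    show K * _ = Kᵀ * _
    rw [hKt, Matrix.neg_mul, Matrix.mul_neg, neg_neg]
  have hCD : CongruentOver O (fromBlocks (altPair a) 0 0
      (C.toBlocks₂₂ - C.toBlocks₂₁ * ⅟C.toBlocks₁₁ * C.toBlocks₁₂)) C := by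
    refine ⟨L, ?_, ?_⟩
    · rw [isUnit_iff_isUnit_det, det_fromBlocks_zero₁₂]
      simp
    · rw [hL, ← h₁₁, fromBlocks_transpose, transpose_one, transpose_zero, transpose_one, ← hKC,
        ← fromBlocks_eq_of_invertible₁₁, fromBlocks_toBlocks]
  exact ⟨_, (hC.of_congruentOver hCD.symm).submatrix Sum.inr, hCD.symm⟩

end Valuation

section AltBlockDiag

variable {F : Type} [Field F] (π : F)

theorem altBlockDiag_zero (m : ℕ) (lam : ℕ → ℤ) : altBlockDiag π m 0 lam = 0 := by
  ext i j
  simp [altBlockDiag]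

theorem altBlockDiag_two_add (n r : ℕ) (d : ℤ) (lam : ℕ → ℤ) :
    altBlockDiag π (2 + n) (r + 1) (fun l => if l = 0 then d else lam (l - 1)) =
      (fromBlocks (altPair (π ^ d)) 0 0 (altBlockDiag π n r lam)).submatrix
        finSumFinEquiv.symm finSumFinEquiv.symm := by
  ext i j
  induction i using Fin.addCases with
  | left s =>
    induction j using Fin.addCases with
    | left t => fin_cases s <;> fin_cases t <;> simp [altBlockDiag, altPair] <;> omega
    | right l => simp [altBlockDiag]; split_ifs <;> first | rfl | omega
  | right k =>
    induction j using Fin.addCases with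
    | left t => simp [altBlockDiag]; split_ifs <;> first | rfl | omega
    | right l =>
      simp [altBlockDiag]
      split_ifs <;> first | rfl | omega

theorem det_altBlockDiag_eq_zero {m r : ℕ} (hr : 2 * r < m) (lam : ℕ → ℤ) :
    (altBlockDiag π m r lam).det = 0 :=
  det_eq_zero_of_row_eq_zero ⟨2 * r, hr⟩ fun j => by simp [altBlockDiag]; omega

theorem altBlockDiag_apply {m r : ℕ} (lam : ℕ → ℤ) (i j : Fin m) :
    altBlockDiag π m r lam i j =
      if i.val < 2 * r ∧ j.val < 2 * r ∧ i.val / 2 = j.val / 2 then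
        if i.val % 2 < j.val % 2 then π ^ lam (i.val / 2)
        else if j.val % 2 < i.val % 2 then -π ^ lam (i.val / 2) else 0
      else 0 := by
  simp only [altBlockDiag, of_apply]
  split_ifs <;> first | rfl | omega | (congr 3; omega)

end AltBlockDiag

section BlockPerm

variable {m r : ℕ} (hr : 2 * r ≤ m)

def blockPermFun (f : Fin r → Fin r) (i : Fin m) : Fin m :=
  if h : i.val < 2 * r then
    ⟨2 * f ⟨i.val / 2, by omega⟩ + i.val % 2, by have := (f ⟨i.val / 2, by omega⟩).isLt; omega⟩
  else i

variable {hr}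

theorem blockPermFun_val_of_lt (f : Fin r → Fin r) {i : Fin m} (hi : i.val < 2 * r) :
    (blockPermFun hr f i).val = 2 * f ⟨i.val / 2, by omega⟩ + i.val % 2 := by
  simp [blockPermFun, hi]

theorem blockPermFun_of_le (f : Fin r → Fin r) {i : Fin m} (hi : 2 * r ≤ i.val) :
    blockPermFun hr f i = i := by
  simp [blockPermFun, hi.not_gt]

theorem leftInverse_blockPermFun {f g : Fin r → Fin r} (h : Function.LeftInverse f g) :
    Function.LeftInverse (blockPermFun hr f) (blockPermFun hr g) := by
  intro i
  by_cases hi : i.val < 2 * r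
  · have hgi := blockPermFun_val_of_lt (hr := hr) g hi
    have hlt : (blockPermFun hr g i).val < 2 * r := by
      have := (g ⟨i.val / 2, by omega⟩).isLt; omega
    have hdiv : (⟨(blockPermFun hr g i).val / 2, by omega⟩ : Fin r) = g ⟨i.val / 2, by omega⟩ :=
      Fin.ext (by dsimp only; omega)
    ext
    rw [blockPermFun_val_of_lt f hlt, hdiv, h, hgi, Fin.val_mk]
    omega
  · rw [blockPermFun_of_le g (not_lt.1 hi), blockPermFun_of_le f (not_lt.1 hi)]

variable (hr)

def blockPerm (τ : Equiv.Perm (Fin r)) : Equiv.Perm (Fin m) where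
  toFun := blockPermFun hr τ
  invFun := blockPermFun hr τ.symm
  left_inv := leftInverse_blockPermFun τ.left_inv
  right_inv := leftInverse_blockPermFun τ.right_inv

theorem coe_blockPerm (τ : Equiv.Perm (Fin r)) : ⇑(blockPerm hr τ) = blockPermFun hr τ := rfl

theorem altBlockDiag_submatrix_blockPerm {F : Type} [Field F] (π : F) (lam : ℕ → ℤ)
    (τ : Equiv.Perm (Fin r)) :
    (altBlockDiag π m r lam).submatrix (blockPerm hr τ) (blockPerm hr τ) =
      altBlockDiag π m r (fun l => if h : l < r then lam (τ ⟨l, h⟩) else lam l) := by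
  ext i j
  rw [submatrix_apply, altBlockDiag_apply, altBlockDiag_apply]
  simp only [coe_blockPerm]
  by_cases hi : i.val < 2 * r; swap
  · simp only [blockPermFun_of_le τ (not_lt.1 hi)]
    split_ifs <;> first | rfl | omega
  by_cases hj : j.val < 2 * r; swap
  · simp only [blockPermFun_of_le τ (not_lt.1 hj)]
    split_ifs <;> first | rfl | omega
  simp only [blockPermFun_val_of_lt τ hi, blockPermFun_val_of_lt τ hj]
  have hτ : (τ ⟨i.val / 2, by omega⟩).val = τ ⟨j.val / 2, by omega⟩ ↔ i.val / 2 = j.val / 2 := by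
    simp [Fin.val_inj]
  by_cases hij : i.val / 2 = j.val / 2
  · replace hτ := hτ.2 hij
    split_ifs <;> first | rfl | omega | (congr 3; omega)
  · replace hτ := mt hτ.1 hij
    split_ifs <;> first | rfl | omega

end BlockPerm

theorem Equiv.Perm.exists_apply_eq_and_apply_eq {α : Type*} [DecidableEq α] {a b x y : α}
    (hab : a ≠ b) (hxy : x ≠ y) : ∃ σ : Equiv.Perm α, σ a = x ∧ σ b = y := by
  set τ := Equiv.swap a x
  have hy : τ y ≠ a := by
    intro h
    apply hxy
    simpa [τ] using (congrArg τ h).symm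
  refine ⟨τ * Equiv.swap b (τ y), ?_, ?_⟩
  · rw [Equiv.Perm.mul_apply, Equiv.swap_apply_of_ne_of_ne hab hy.symm, Equiv.swap_apply_left]
  · rw [Equiv.Perm.mul_apply, Equiv.swap_apply_left, Equiv.swap_apply_self]

section Reduction

variable {F : Type} [Field F] {w : AddValuation F (WithTop ℤ)} {O : Subring F} {π : F}

theorem exists_congruentOver_altBlockDiag (hO : ∀ x, x ∈ O ↔ 0 ≤ w x) (hπ : w π = 1) {m : ℕ}
    {A : Matrix (Fin m) (Fin m) F} (hA : IsAlternating A) :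
    ∃ r lam, 2 * r ≤ m ∧ CongruentOver O A (altBlockDiag π m r lam) := by
  induction m using Nat.strong_induction_on with
  | _ m ih =>
  by_cases hA0 : A = 0
  · exact ⟨0, 0, by omega, by rw [hA0, altBlockDiag_zero]; exact .refl 0⟩
  obtain ⟨i, j, d, hd, hmin⟩ := exists_min_addValuation_apply w hA0
  have hij : i ≠ j := by rintro rfl; simp [hA.2, w.map_zero] at hd
  obtain ⟨n, rfl⟩ : ∃ n, m = 2 + n := ⟨m - 2, by have := Fin.val_ne_of_ne hij; omega⟩
  obtain ⟨σ, hσ₀, hσ₁⟩ := Equiv.Perm.exists_apply_eq_and_apply_eq (a := Fin.castAdd n 0)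
    (b := Fin.castAdd n 1) (by simp) hij
  set C := (A.submatrix σ σ).submatrix finSumFinEquiv finSumFinEquiv
  have h₁₁ : C.toBlocks₁₁ = altPair (A i j) := by
    ext s t
    fin_cases s <;> fin_cases t <;> simp [altPair, C, toBlocks₁₁, hσ₀, hσ₁, hA.2, hA.apply_swap i j]
  obtain ⟨S, hS, hCS⟩ :=
    exists_congruentOver_fromBlocks_altPair hO hd ((hA.submatrix _).submatrix _) h₁₁ fun _ _ =>
      hmin _ _
  obtain ⟨r, lam, hr, hSD⟩ := ih n (by omega) hS
  refine ⟨r + 1, fun l => if l = 0 then d else lam (l - 1), by omega, ?_⟩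
  rw [altBlockDiag_two_add]
  refine (congruentOver_submatrix A σ).trans ?_
  simpa [C, Function.comp_assoc] using
    (hCS.trans ((congruentOver_altPair hO hπ hd).fromBlocks_zero hSD)).submatrix finSumFinEquiv.symm

theorem exists_congruentOver_altBlockDiag_antitone (hO : ∀ x, x ∈ O ↔ 0 ≤ w x) (hπ : w π = 1)
    {m : ℕ} {A : Matrix (Fin m) (Fin m) F} (hA : IsAlternating A) :
    ∃ r lam, 2 * r ≤ m ∧ (∀ i j, i ≤ j → j < r → lam j ≤ lam i) ∧
      CongruentOver O A (altBlockDiag π m r lam) := by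
  obtain ⟨r, lam, hr, h⟩ := exists_congruentOver_altBlockDiag hO hπ hA
  set τ := Tuple.sort fun l : Fin r => OrderDual.toDual (lam l)
  refine ⟨r, fun l => if h : l < r then lam (τ ⟨l, h⟩) else lam l, hr, fun i j hij hj => ?_, ?_⟩
  · simp only [dif_pos hj, dif_pos (hij.trans_lt hj)]
    exact Tuple.monotone_sort (fun l : Fin r => OrderDual.toDual (lam l))
      (show (⟨i, hij.trans_lt hj⟩ : Fin r) ≤ ⟨j, hj⟩ from hij)
  · rw [← altBlockDiag_submatrix_blockPerm hr]
    exact h.trans (congruentOver_submatrix _ _)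

end Reduction

/-- Smith normal form of an alternating matrix over the fraction field `F` of a
discrete valuation ring `O` (with uniformizer `π` and valuation `v`, `O = {x | v x ≥ 0}`):
there are `U ∈ GL_m(O)`, `r` with `2r ≤ m` and integers `λ₁ ≥ … ≥ λ_r` with
`U·A·Uᵀ = diag(J(λ₁), …, J(λ_r), 0)`; moreover if `m` is even and `det A ≠ 0` then `2r = m`. -/
theorem stmt0 {F : Type} [Field F] (v : F → WithTop ℤ)
    (hv0 : ∀ x, v x = ⊤ ↔ x = 0)
    (hvmul : ∀ x y, v (x * y) = v x + v y)
    (hvadd : ∀ x y, min (v x) (v y) ≤ v (x + y))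
    (π : F) (hπ : v π = 1)
    (O : Subring F) (hO : ∀ x, x ∈ O ↔ 0 ≤ v x)
    (m : ℕ) (A : Matrix (Fin m) (Fin m) F)
    (hAalt : A.transpose = -A) (hAdiag : ∀ i, A i i = 0) :
    ∃ (U : Matrix (Fin m) (Fin m) F) (r : ℕ) (lam : ℕ → ℤ),
      (∀ i j, U i j ∈ O) ∧
      (∃ V : Matrix (Fin m) (Fin m) F, (∀ i j, V i j ∈ O) ∧ U * V = 1 ∧ V * U = 1) ∧
      2 * r ≤ m ∧
      (∀ i j, i ≤ j → j < r → lam j ≤ lam i) ∧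
      U * A * U.transpose = altBlockDiag π m r lam ∧
      (m % 2 = 0 → A.det ≠ 0 → 2 * r = m) := by
  have hv1 : v 1 = 0 := by
    have h := hvmul 1 1
    rw [mul_one] at h
    obtain ⟨a, ha⟩ := WithTop.ne_top_iff_exists.1 ((hv0 1).not.2 one_ne_zero)
    rw [← ha] at h ⊢
    norm_cast at h ⊢
    omega
  obtain ⟨r, lam, hr, hlam, hAU⟩ := exists_congruentOver_altBlockDiag_antitone
    (w := AddValuation.of v ((hv0 0).2 rfl) hv1 hvadd hvmul) hO hπ ⟨hAalt, hAdiag⟩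
  obtain ⟨_, ⟨U, rfl⟩, hUA⟩ := hAU
  refine ⟨(↑U : Matrix (Fin m) (Fin m) O).map O.subtype, r, lam, fun i j => (U.1 i j).2,
    ⟨(↑U⁻¹ : Matrix (Fin m) (Fin m) O).map O.subtype, fun i j => (U⁻¹.1 i j).2, ?_, ?_⟩,
    hr, hlam, hUA, fun _ hA => ?_⟩
  · rw [← Matrix.map_mul, U.mul_inv, Matrix.map_one _ (map_zero _) (map_one _)]
  · rw [← Matrix.map_mul, U.inv_mul, Matrix.map_one _ (map_zero _) (map_one _)]
  · by_contra h
    exact CongruentOver.det_ne_zero ⟨_, U.isUnit, hUA⟩ hA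
      (det_altBlockDiag_eq_zero π (by omega) lam)
end

section
/- Let A ∈ M_n(E) satisfy A* = A and det A ≠ 0. Then there exist U ∈ GL_n(𝔬) and integers λ_1 ≥ λ_2 ≥ … ≥ λ_n such that U·A·U* = diag(π^{λ_1}, π^{λ_2}, …, π^{λ_n}). -/
/-!
The diagonalization is the usual pivoting argument over `𝔬`. If no diagonal entry has minimal
valuation, conjugating by a transvection puts one there: this needs a unit `c` with
`v (c b + (c b)*) = v b`, which exists because the residue involution is nontrivial. Permuting
that entry to the corner and clearing its row and column by an integral row operation splits off
a `1 × 1` block, and induction handles the rest.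

Each diagonal entry `d` is `π ^ k` times a `σ`-fixed unit `u`, and `u = w w*` for a unit `w`:
modulo `π` because norms of finite fields are surjective, and then exactly by successive
approximation, since correcting `w` to `w (1 + t)` with `t + t* = (u - w w*) / (w w*)` doubles
the valuation of the error, and `E` is complete. A permutation finally sorts the exponents.
-/

open IsLocalRing Matrix

theorem WithTop.one_le_iff_pos_of_int {a : WithTop ℤ} : 1 ≤ a ↔ 0 < a := by
  induction a with
  | top => simp
  | coe a => norm_cast

theorem WithTop.eq_zero_of_add_self_eq {a : WithTop ℤ} (ha : a ≠ ⊤) (h : a + a = a) : a = 0 := by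
  obtain ⟨k, rfl⟩ := WithTop.ne_top_iff_exists.mp ha
  norm_cast at h ⊢
  omega

abbrev StarRing.ofInvolutive {R : Type*} [CommRing R] (σ : R →+* R) (hσ : ∀ x, σ (σ x) = x) :
    StarRing R where
  star := σ
  star_involutive := hσ
  star_mul x y := by rw [map_mul, mul_comm]
  star_add := map_add σ

theorem FiniteField.exists_mul_apply_eq_of_apply_eq {K : Type*} [Field K] [Finite K]
    (τ : K →+* K) (hτ : ∀ x, τ (τ x) = x) (hτ1 : τ ≠ RingHom.id K) {y : K} (hy : τ y = y) :
    ∃ z, z * τ z = y := by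
  classical
  -- By Artin's theorem `Gal(K/F) = {1, τ}` for the fixed field `F` of `τ`, so the norm of
  -- `K/F` is `z ↦ z * τ z`, and norms of extensions of finite fields are surjective.
  let τe : K ≃+* K := RingEquiv.ofRingHom τ τ (RingHom.ext hτ) (RingHom.ext hτ)
  let G := Subgroup.zpowers τe
  have hτe : τe ≠ 1 := fun h => hτ1 (RingHom.ext fun x => RingEquiv.congr_fun h x)
  have hcard : Nat.card G = 2 := by
    rw [Nat.card_zpowers]; exact orderOf_eq_prime (RingEquiv.ext hτ) hτe
  have : Fintype G := @Fintype.ofFinite G (Nat.finite_of_card_ne_zero (by omega))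
  let F := FixedPoints.subfield G K
  have hyF : y ∈ F := fun ⟨g, hg⟩ =>
    (Subgroup.zpowers_le.mpr hy : G ≤ MulAction.stabilizer (K ≃+* K) y) hg
  let τF : Gal(K/F) := AlgEquiv.ofRingEquiv (f := τe) fun x => x.2 ⟨τe, Subgroup.mem_zpowers τe⟩
  have hτF : τF ≠ 1 := fun h => hτe (RingEquiv.ext fun x => AlgEquiv.congr_fun h x)
  have hGal : (Finset.univ : Finset Gal(K/F)) = {1, τF} := by
    refine (Finset.eq_of_subset_of_card_le (Finset.subset_univ _) ?_).symm
    rw [Finset.card_univ, Finset.card_pair (Ne.symm hτF), ← Nat.card_eq_fintype_card,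
      IsGalois.card_aut_eq_finrank, FixedPoints.finrank_eq_card, ← Nat.card_eq_fintype_card, hcard]
  obtain ⟨z, hz⟩ := FiniteField.norm_surjective F K ⟨y, hyF⟩
  refine ⟨z, ?_⟩
  have := Algebra.norm_eq_prod_automorphisms F z
  rw [hz, hGal, Finset.prod_pair (Ne.symm hτF)] at this
  exact this.symm

theorem IsLocalRing.exists_mul_apply_sub_mem_maximalIdeal {R : Type*} [CommRing R]
    [IsLocalRing R] [Finite (ResidueField R)] (σ : R →+* R) (hσ : ∀ x, σ (σ x) = x)
    (hres : ∃ x, IsUnit (σ x - x)) {u : R} (hu : σ u = u) :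
    ∃ w, w * σ w - u ∈ maximalIdeal R := by
  have : IsLocalHom σ := ⟨fun a ha => by simpa [hσ] using ha.map σ⟩
  let τ := ResidueField.map σ
  have hτ : ∀ r, τ (τ r) = r := fun r => by
    obtain ⟨x, rfl⟩ := residue_surjective r
    simp [τ, ResidueField.map_residue, hσ]
  have hτ1 : τ ≠ RingHom.id _ := fun h => by
    obtain ⟨x, hx⟩ := hres
    have : residue R (σ x - x) = 0 := by
      rw [map_sub, ← ResidueField.map_residue, show ResidueField.map σ = τ from rfl, h]
      exact sub_self _
    exact (residue_eq_zero_iff _).mp this hx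
  obtain ⟨z, hz⟩ := FiniteField.exists_mul_apply_eq_of_apply_eq τ hτ hτ1
    (y := residue R u) (by rw [ResidueField.map_residue, hu])
  obtain ⟨w, rfl⟩ := residue_surjective z
  refine ⟨w, (residue_eq_zero_iff _).mp ?_⟩
  rw [map_sub, map_mul, ← ResidueField.map_residue, ← hz]
  exact sub_self _

namespace Matrix

section CornerBlock

variable {R : Type*} [Zero R] {n : ℕ}

/-- The block diagonal matrix `diag(a, M)`. -/
def cornerBlock (a : R) (M : Matrix (Fin n) (Fin n) R) : Matrix (Fin (n + 1)) (Fin (n + 1)) R :=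
  of (Fin.cons (Fin.cons a 0) fun i => Fin.cons 0 (M i))

variable (a : R) (M : Matrix (Fin n) (Fin n) R)

@[simp] theorem cornerBlock_zero_zero : cornerBlock a M 0 0 = a := rfl
@[simp] theorem cornerBlock_zero_succ (j : Fin n) : cornerBlock a M 0 j.succ = 0 := rfl
@[simp] theorem cornerBlock_succ_zero (i : Fin n) : cornerBlock a M i.succ 0 = 0 := rfl
@[simp] theorem cornerBlock_succ_succ (i j : Fin n) : cornerBlock a M i.succ j.succ = M i j := rfl

@[simp] theorem submatrix_succ_succ_cornerBlock :
    (cornerBlock a M).submatrix Fin.succ Fin.succ = M := rfl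

theorem eq_cornerBlock (B : Matrix (Fin (n + 1)) (Fin (n + 1)) R)
    (hrow : ∀ j : Fin n, B 0 j.succ = 0) (hcol : ∀ i : Fin n, B i.succ 0 = 0) :
    B = cornerBlock (B 0 0) (B.submatrix Fin.succ Fin.succ) := by
  ext i j
  cases i using Fin.cases <;> cases j using Fin.cases <;> simp [hrow, hcol]

theorem cornerBlock_diagonal (d : Fin n → R) :
    cornerBlock a (diagonal d) = diagonal (Fin.cons a d) := by
  ext i j
  cases i using Fin.cases <;> cases j using Fin.cases <;>
    simp [diagonal_apply, Fin.succ_ne_zero, (Fin.succ_ne_zero _).symm]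

end CornerBlock

theorem cornerBlock_mul_cornerBlock {R : Type*} [NonUnitalNonAssocSemiring R] {n : ℕ} (a b : R)
    (M N : Matrix (Fin n) (Fin n) R) :
    cornerBlock a M * cornerBlock b N = cornerBlock (a * b) (M * N) := by
  ext i j
  cases i using Fin.cases <;> cases j using Fin.cases <;> simp [mul_apply, Fin.sum_univ_succ]

theorem conjTranspose_cornerBlock {R : Type*} [AddMonoid R] [StarAddMonoid R] {n : ℕ} (a : R)
    (M : Matrix (Fin n) (Fin n) R) : (cornerBlock a M)ᴴ = cornerBlock (star a) Mᴴ := by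
  ext i j
  cases i using Fin.cases <;> cases j using Fin.cases <;> simp

theorem det_cornerBlock {R : Type*} [CommRing R] {n : ℕ} (a : R) (M : Matrix (Fin n) (Fin n) R) :
    (cornerBlock a M).det = a * M.det := by
  simp [det_succ_row_zero, Fin.sum_univ_succ]

theorem permMatrix_mul_mul_conjTranspose {R : Type*} [CommRing R] [StarRing R] {ι : Type*}
    [Fintype ι] [DecidableEq ι] (σ : Equiv.Perm ι) (A : Matrix ι ι R) :
    σ.permMatrix R * A * (σ.permMatrix R)ᴴ = A.submatrix σ σ := by
  rw [conjTranspose_permMatrix, PEquiv.toMatrix_toPEquiv_mul, PEquiv.mul_toMatrix_toPEquiv]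
  rfl

theorem one_add_vecMulVec_single_mul_mul_conjTranspose_apply {R : Type*} [CommRing R]
    [StarRing R] {ι : Type*} [Fintype ι] [DecidableEq ι] (g : ι → R) (k : ι) (B : Matrix ι ι R)
    (i j : ι) :
    ((1 + vecMulVec g (Pi.single k 1)) * B * (1 + vecMulVec g (Pi.single k 1))ᴴ :
      Matrix ι ι R) i j =
      B i j + g i * B k j + B i k * star (g j) + g i * B k k * star (g j) := by
  simp [add_mul, mul_add, mul_apply, vecMulVec_apply, Pi.single_apply, Finset.sum_add_distrib,
    conjTranspose_vecMulVec, one_apply]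
  ring

theorem det_one_add_vecMulVec_single {R : Type*} [CommRing R] {ι : Type*} [Fintype ι]
    [DecidableEq ι] (g : ι → R) (k : ι) :
    (1 + vecMulVec g (Pi.single k (1 : R))).det = 1 + g k := by
  rw [vecMulVec_eq Unit, det_one_add_replicateCol_mul_replicateRow]
  simp

end Matrix

namespace AddValuation

section Field

variable {E : Type*} [Field E] (v : AddValuation E (WithTop ℤ))

theorem mem_toValuation_valuationSubring_iff (x : E) :
    x ∈ v.toValuation.valuationSubring ↔ 0 ≤ v x := Iff.rfl

theorem map_zpow_eq_of_map_eq_one {π : E} (hπ : v π = 1) (k : ℤ) : v (π ^ k) = k := by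
  obtain ⟨n, rfl | rfl⟩ := k.eq_nat_or_neg
  · simp [v.map_pow, hπ]
  · rw [_root_.zpow_neg, zpow_natCast, v.map_inv, v.map_pow, hπ, nsmul_one, ← WithTop.coe_natCast,
      ← WithTop.LinearOrderedAddCommGroup.coe_neg]

theorem map_div_nonneg {x y : E} (hy : y ≠ 0) (h : v y ≤ v x) : 0 ≤ v (x / y) := by
  have hxy := v.map_mul (x / y) y
  rw [div_mul_cancel₀ x hy] at hxy
  obtain ⟨k, hk⟩ := WithTop.ne_top_iff_exists.mp (v.ne_top_iff.mpr hy)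
  induction h' : v (x / y) with
  | top => exact le_top
  | coe m =>
    rw [hxy, h', ← hk] at h
    norm_cast at h ⊢
    omega

def IsComplete : Prop :=
  ∀ f : ℕ → E,
    (∀ N : ℤ, ∃ M : ℕ, ∀ m₁ m₂ : ℕ, M ≤ m₁ → M ≤ m₂ → (N : WithTop ℤ) ≤ v (f m₁ - f m₂)) →
      ∃ L : E, ∀ N : ℤ, ∃ M : ℕ, ∀ m : ℕ, M ≤ m → (N : WithTop ℤ) ≤ v (f m - L)

theorem le_map_sub_of_le_map_sub_succ {f : ℕ → E}
    (hf : ∀ k : ℕ, ((k : ℤ) : WithTop ℤ) ≤ v (f (k + 1) - f k)) {a b : ℕ} (hab : a ≤ b) :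
    ((a : ℤ) : WithTop ℤ) ≤ v (f b - f a) := by
  induction b, hab using Nat.le_induction with
  | base => simp
  | succ b hab ih =>
    rw [← sub_add_sub_cancel]
    exact v.map_le_add ((WithTop.coe_le_coe.mpr (Int.ofNat_le.mpr hab)).trans (hf b)) ih

theorem finite_residueField (hfin : ∃ S : Finset E, ∀ x, 0 ≤ v x → ∃ y ∈ S, 1 ≤ v (x - y)) :
    Finite (ResidueField v.toValuation.valuationSubring) := by
  classical
  obtain ⟨S, hS⟩ := hfin
  refine Finite.of_surjective
    (fun y : S => if h : y.1 ∈ v.toValuation.valuationSubring then residue _ ⟨y, h⟩ else 0) ?_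
  intro r
  obtain ⟨x, rfl⟩ := residue_surjective r
  obtain ⟨y, hyS, hxy⟩ := hS x x.2
  have hxy : 0 < v (x - y) := WithTop.one_le_iff_pos_of_int.mp hxy
  have hy : 0 ≤ v y := by
    have := v.map_le_sub x.2 hxy.le
    rwa [sub_sub_cancel] at this
  refine ⟨⟨y, hyS⟩, ?_⟩
  dsimp only
  rw [dif_pos ((v.mem_toValuation_valuationSubring_iff y).mpr hy), ← sub_eq_zero,
    ← _root_.map_sub, residue_eq_zero_iff, Valuation.mem_maximalIdeal_iff]
  exact v.map_sub_swap x y ▸ hxy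

theorem le_map_mul_apply {ι κ μ : Type*} [Fintype κ] {a b : WithTop ℤ} {A : Matrix ι κ E}
    {B : Matrix κ μ E} (hA : ∀ i k, a ≤ v (A i k)) (hB : ∀ k j, b ≤ v (B k j)) (i : ι) (j : μ) :
    a + b ≤ v ((A * B) i j) :=
  v.map_le_sum fun k _ => (v.map_mul _ _).symm ▸ add_le_add (hA i k) (hB k j)

variable {ι : Type*} [Fintype ι] [DecidableEq ι]

/-- Membership in `GL_n(𝔬)`, where `𝔬 = {x | 0 ≤ v x}`. -/
def IsIntegralUnit (U : Matrix ι ι E) : Prop :=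
  (∀ i j, 0 ≤ v (U i j)) ∧ v U.det = 0

theorem map_det_nonneg {U : Matrix ι ι E} (hU : ∀ i j, 0 ≤ v (U i j)) : 0 ≤ v U.det := by
  let U' : Matrix ι ι v.toValuation.integer := Matrix.of fun i j => ⟨U i j, hU i j⟩
  have : U = v.toValuation.integer.subtype.mapMatrix U' := rfl
  rw [this, ← RingHom.map_det]
  exact (U'.det).2

theorem map_adjugate_nonneg {U : Matrix ι ι E} (hU : ∀ i j, 0 ≤ v (U i j)) (i j : ι) :
    0 ≤ v (U.adjugate i j) := by
  let U' : Matrix ι ι v.toValuation.integer := Matrix.of fun i j => ⟨U i j, hU i j⟩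
  have : U = v.toValuation.integer.subtype.mapMatrix U' := rfl
  rw [this, ← RingHom.map_adjugate]
  exact (U'.adjugate i j).2

theorem isIntegralUnit_diagonal {d : ι → E} (hd : ∀ i, v (d i) = 0) :
    v.IsIntegralUnit (diagonal d) := by
  refine ⟨fun i j => ?_, ?_⟩
  · rw [diagonal_apply]
    split_ifs with h
    · exact (hd i).ge
    · simp
  · rw [det_diagonal]
    exact Finset.prod_induction _ (fun x => v x = 0)
      (fun a b ha hb => by rw [v.map_mul, ha, hb, add_zero]) v.map_one fun i _ => hd i

theorem isIntegralUnit_one : v.IsIntegralUnit (1 : Matrix ι ι E) := by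
  simpa using v.isIntegralUnit_diagonal fun _ : ι => v.map_one

theorem isIntegralUnit_permMatrix (σ : Equiv.Perm ι) : v.IsIntegralUnit (σ.permMatrix E) := by
  refine ⟨fun i j => ?_, ?_⟩
  · by_cases h : σ i = j <;> simp [Equiv.toPEquiv_apply, h]
  · rw [det_permutation]
    rcases Int.units_eq_one_or (Equiv.Perm.sign σ) with h | h <;> simp [h]

theorem isIntegralUnit_one_add_vecMulVec_single {g : ι → E} (hg : ∀ i, 0 ≤ v (g i)) {k : ι}
    (hk : g k = 0) : v.IsIntegralUnit (1 + vecMulVec g (Pi.single k 1)) := by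
  refine ⟨fun i j => v.map_le_add ?_ ?_, ?_⟩
  · rw [one_apply]
    split_ifs <;> simp
  · rw [vecMulVec_apply, v.map_mul]
    refine add_nonneg (hg i) ?_
    rw [Pi.single_apply]
    split_ifs <;> simp
  · rw [det_one_add_vecMulVec_single, hk, add_zero, v.map_one]

theorem isIntegralUnit_cornerBlock_one {n : ℕ} {U : Matrix (Fin n) (Fin n) E}
    (hU : v.IsIntegralUnit U) : v.IsIntegralUnit (cornerBlock 1 U) := by
  refine ⟨fun i j => ?_, by rw [det_cornerBlock, one_mul, hU.2]⟩
  cases i using Fin.cases <;> cases j using Fin.cases <;> simp [hU.1]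

variable {v}

theorem IsIntegralUnit.det_ne_zero {U : Matrix ι ι E} (hU : v.IsIntegralUnit U) : U.det ≠ 0 :=
  v.ne_top_iff.mp (hU.2 ▸ WithTop.zero_ne_top)

theorem IsIntegralUnit.mul {U W : Matrix ι ι E} (hU : v.IsIntegralUnit U)
    (hW : v.IsIntegralUnit W) : v.IsIntegralUnit (U * W) :=
  ⟨fun i j => by simpa using v.le_map_mul_apply hU.1 hW.1 i j,
    by rw [det_mul, v.map_mul, hU.2, hW.2, add_zero]⟩

theorem IsIntegralUnit.exists_inv {U : Matrix ι ι E} (hU : v.IsIntegralUnit U) :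
    ∃ V : Matrix ι ι E, (∀ i j, 0 ≤ v (V i j)) ∧ U * V = 1 ∧ V * U = 1 := by
  have hdet : IsUnit U.det := hU.det_ne_zero.isUnit
  refine ⟨U⁻¹, fun i j => ?_, mul_nonsing_inv U hdet, nonsing_inv_mul U hdet⟩
  rw [inv_def, Ring.inverse_eq_inv', Matrix.smul_apply, smul_eq_mul, v.map_mul, v.map_inv, hU.2]
  simpa using v.map_adjugate_nonneg hU.1 i j

end Field

section Star

variable {E : Type*} [Field E] [StarRing E] {ι : Type*} [Fintype ι] [DecidableEq ι]

theorem map_star_eq_of_nonneg (v : AddValuation E (WithTop ℤ)) {π : E} (hπ : v π = 1)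
    (hπs : star π = π) (h : ∀ x, 0 ≤ v x → 0 ≤ v (star x)) (x : E) : v (star x) = v x := by
  suffices key : ∀ x, v x ≤ v (star x) from
    le_antisymm (by simpa using key (star x)) (key x)
  intro x
  rcases eq_or_ne x 0 with rfl | hx
  · simp
  obtain ⟨k, hk⟩ := WithTop.ne_top_iff_exists.mp (v.ne_top_iff.mpr hx)
  have hunit : 0 ≤ v (π ^ (-k) * x) := by
    rw [v.map_mul, v.map_zpow_eq_of_map_eq_one hπ, ← hk, ← WithTop.coe_add, neg_add_cancel]
    rfl
  have := h _ hunit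
  rw [star_mul', star_zpow₀, hπs, v.map_mul, v.map_zpow_eq_of_map_eq_one hπ] at this
  rw [← hk]
  induction h : v (star x) with
  | top => exact le_top
  | coe a =>
    rw [h] at this
    norm_cast at this ⊢
    omega

theorem IsIntegralUnit.det_mul_mul_conjTranspose_ne_zero {v : AddValuation E (WithTop ℤ)}
    {U A : Matrix ι ι E} (hU : v.IsIntegralUnit U) (hA : A.det ≠ 0) : (U * A * Uᴴ).det ≠ 0 := by
  rw [det_mul, det_mul, det_conjTranspose]
  exact mul_ne_zero (mul_ne_zero hU.det_ne_zero hA) (star_ne_zero.mpr hU.det_ne_zero)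

theorem exists_isIntegralUnit_clear_first_row {v : AddValuation E (WithTop ℤ)} {n : ℕ}
    {B : Matrix (Fin (n + 1)) (Fin (n + 1)) E} (hB : B.IsHermitian) (h0 : B 0 0 ≠ 0)
    (hmin : ∀ i j, v (B 0 0) ≤ v (B i j)) :
    ∃ C, v.IsIntegralUnit C ∧ ∃ B', C * B * Cᴴ = cornerBlock (B 0 0) B' := by
  let g : Fin (n + 1) → E := Fin.cons 0 fun i => -(B i.succ 0 / B 0 0)
  have hg : ∀ i, 0 ≤ v (g i) := Fin.cases (by simp [g]) fun i => by
    simpa [g] using v.map_div_nonneg h0 (hmin _ _)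
  have hC := one_add_vecMulVec_single_mul_mul_conjTranspose_apply g 0 B
  set C : Matrix (Fin (n + 1)) (Fin (n + 1)) E := 1 + vecMulVec g (Pi.single 0 1)
  have hcol : ∀ i : Fin n, (C * B * Cᴴ) i.succ 0 = 0 := fun i => by
    rw [hC]
    simp [g, div_mul_cancel₀ _ h0]
  have hrow : ∀ j : Fin n, (C * B * Cᴴ) 0 j.succ = 0 := fun j => by
    rw [← (isHermitian_mul_mul_conjTranspose C hB).apply, hcol, star_zero]
  have h00 : (C * B * Cᴴ) 0 0 = B 0 0 := by simp [hC, g]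
  refine ⟨C, v.isIntegralUnit_one_add_vecMulVec_single hg rfl,
    (C * B * Cᴴ).submatrix Fin.succ Fin.succ, ?_⟩
  rw [← h00]
  exact eq_cornerBlock _ hrow hcol

variable {v : AddValuation E (WithTop ℤ)} (hv : ∀ x, v (star x) = v x)
include hv

theorem le_map_mul_mul_conjTranspose_apply {κ : Type*} [Fintype κ] {μ : WithTop ℤ}
    {T A : Matrix κ κ E} (hT : ∀ i j, 0 ≤ v (T i j)) (hA : ∀ i j, μ ≤ v (A i j)) (i j : κ) :
    μ ≤ v ((T * A * Tᴴ) i j) := by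
  calc μ = 0 + μ + 0 := by rw [zero_add, add_zero]
    _ ≤ v ((T * A * Tᴴ) i j) := v.le_map_mul_apply (v.le_map_mul_apply hT hA) (B := Tᴴ)
      (fun k j => by rw [conjTranspose_apply, hv]; exact hT j k) i j

variable (hres : ∃ x, 0 ≤ v x ∧ v (star x - x) ≤ 0)
include hres

theorem exists_mul_star_sub_pos [Finite (ResidueField v.toValuation.valuationSubring)]
    {u : E} (hu : v u = 0) (hus : star u = u) : ∃ w, v w = 0 ∧ 0 < v (w * star w - u) := by
  let σ := (starRingEnd E).restrict v.toValuation.valuationSubring v.toValuation.valuationSubring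
    fun x (hx : 0 ≤ v x) => show 0 ≤ v (star x) from (hv x).symm ▸ hx
  have hunit : ∃ x, IsUnit (σ x - x) := by
    obtain ⟨x, hx, hx'⟩ := hres
    refine ⟨⟨x, hx⟩, not_not.mp fun h => hx'.not_gt ?_⟩
    exact (Valuation.mem_maximalIdeal_iff _ _).mp ((mem_maximalIdeal _).mpr h)
  obtain ⟨w, hw⟩ := exists_mul_apply_sub_mem_maximalIdeal σ (fun x => Subtype.ext (star_star _))
    hunit (u := ⟨u, hu.ge⟩) (Subtype.ext hus)
  have hpos : 0 < v (w * star (w : E) - u) := (Valuation.mem_maximalIdeal_iff _ _).mp hw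
  refine ⟨w, ?_, hpos⟩
  have hnorm : v (w * star (w : E)) = 0 := by
    rw [← sub_add_cancel (w * star (w : E)) u, v.map_add_eq_of_lt_right (hu ▸ hpos), hu]
  rw [v.map_mul, hv] at hnorm
  exact ((add_eq_zero_iff_of_nonneg w.2 w.2).mp hnorm).1

theorem exists_map_mul_add_star_eq (b : E) :
    ∃ c, v c = 0 ∧ v (c * b + star (c * b)) = v b := by
  obtain ⟨x, hx, hx'⟩ := hres
  have hvx : v x ≤ v (star x - x) := by simpa [hv] using v.map_sub (star x) x
  have hx0 : v x = 0 := le_antisymm (hvx.trans hx') hx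
  have hd : v (star x - x) = 0 := le_antisymm hx' (hx0 ▸ hvx)
  have hb : v b ≤ v (b + star b) := by simpa [hv] using v.map_add b (star b)
  rcases hb.eq_or_lt with h | h
  · exact ⟨1, v.map_one, by simpa using h.symm⟩
  refine ⟨x, hx0, ?_⟩
  have : x * b + star (x * b) = (star x - x) * star b + x * (b + star b) := by rw [star_mul']; ring
  rw [this, v.map_add_eq_of_lt_left, v.map_mul, hd, hv, zero_add]
  rwa [v.map_mul, v.map_mul, hd, hv, hx0, zero_add, zero_add]

theorem exists_add_star_eq {c : E} (hc : star c = c) : ∃ t, v t = v c ∧ t + star t = c := by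
  obtain ⟨z, hz, hzz⟩ := exists_map_mul_add_star_eq hv hres 1
  rw [mul_one, v.map_one] at hzz
  have hne : z + star z ≠ 0 := v.ne_top_iff.mp (hzz ▸ WithTop.zero_ne_top)
  refine ⟨c * z / (z + star z), ?_, ?_⟩
  · rw [v.map_div, v.map_mul, hz, hzz]
    simp
  · have hself : star (z + star z) = z + star z := by rw [star_add, star_star, add_comm]
    rw [star_div₀, star_mul', hc, hself, ← add_div, ← mul_add, mul_div_assoc, div_self hne,
      mul_one]

theorem exists_map_mul_star_sub_eq_add_self {u w : E} (hus : star u = u) (hw : v w = 0)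
    (he : 0 < v (w * star w - u)) :
    ∃ w', v w' = 0 ∧ v (w' * star w' - u) = v (w * star w - u) + v (w * star w - u) ∧
      v (w' - w) = v (w * star w - u) := by
  have hs : v (w * star w) = 0 := by rw [v.map_mul, hv, hw, add_zero]
  have hs0 : w * star w ≠ 0 := v.ne_top_iff.mp (hs ▸ WithTop.zero_ne_top)
  have hss : star (w * star w) = w * star w := by rw [star_mul', star_star, mul_comm]
  obtain ⟨t, ht, htt⟩ := exists_add_star_eq hv hres (c := (u - w * star w) / (w * star w))
    (by rw [star_div₀, star_sub, hus, hss])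
  have hvt : v t = v (w * star w - u) := by rw [ht, v.map_div, hs, sub_zero, v.map_sub_swap]
  have hst : w * star w * (t + star t) = u - w * star w := by rw [htt, mul_div_cancel₀ _ hs0]
  refine ⟨w * (1 + t), ?_, ?_, ?_⟩
  · rw [v.map_mul, hw, zero_add, v.map_add_eq_of_lt_left (by rwa [v.map_one, hvt]), v.map_one]
  · have : w * (1 + t) * star (w * (1 + t)) - u = w * star w * (t * star t) := by
      rw [star_mul', star_add, star_one]
      linear_combination hst
    rw [this, v.map_mul, hs, v.map_mul, hv, hvt, zero_add]
  · rw [mul_one_add, add_sub_cancel_left, v.map_mul, hw, zero_add, hvt]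

theorem exists_mul_star_eq_of_approx (hcomplete : v.IsComplete) {u w₀ : E} (hus : star u = u)
    (hw₀ : v w₀ = 0) (h₀ : 0 < v (w₀ * star w₀ - u)) : ∃ w, v w = 0 ∧ w * star w = u := by
  let P : E → Prop := fun w => v w = 0 ∧ 0 < v (w * star w - u)
  have step : ∀ w : Subtype P, ∃ w' : Subtype P,
      v (w'.1 * star w'.1 - u) = v (w.1 * star w.1 - u) + v (w.1 * star w.1 - u) ∧
        v (w'.1 - w.1) = v (w.1 * star w.1 - u) := by
    rintro ⟨w, hw, he⟩
    obtain ⟨w', hw', he', hd⟩ := exists_map_mul_star_sub_eq_add_self hv hres hus hw he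
    exact ⟨⟨w', hw', he' ▸ he.trans_le (le_add_of_nonneg_right he.le)⟩, he', hd⟩
  choose next hnext using step
  let f : ℕ → Subtype P := fun k => next^[k] ⟨w₀, hw₀, h₀⟩
  have hf : ∀ k, f (k + 1) = next (f k) := fun k => Function.iterate_succ_apply' _ _ _
  have herr : ∀ k : ℕ, ((k + 1 : ℤ) : WithTop ℤ) ≤ v ((f k).1 * star (f k).1 - u) := by
    intro k
    induction k with
    | zero => exact WithTop.one_le_iff_pos_of_int.mpr h₀
    | succ k ih =>
      rw [hf, (hnext _).1]
      push_cast
      exact add_le_add ih (WithTop.one_le_iff_pos_of_int.mpr (f k).2.2)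
  have hcauchy : ∀ k : ℕ, ((k : ℤ) : WithTop ℤ) ≤ v ((f (k + 1)).1 - (f k).1) := fun k => by
    rw [hf, (hnext _).2]
    exact (WithTop.coe_le_coe.mpr (by omega)).trans (herr k)
  obtain ⟨L, hL⟩ := hcomplete (fun k => (f k).1) fun N => ⟨N.toNat, fun m₁ m₂ h₁ h₂ => by
    rcases le_total m₁ m₂ with h | h
    · rw [v.map_sub_swap]
      exact (WithTop.coe_le_coe.mpr (show N ≤ m₁ by omega)).trans
        (v.le_map_sub_of_le_map_sub_succ (f := fun k => (f k).1) hcauchy h)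
    · exact (WithTop.coe_le_coe.mpr (show N ≤ m₂ by omega)).trans
        (v.le_map_sub_of_le_map_sub_succ (f := fun k => (f k).1) hcauchy h)⟩
  have hL0 : v L = 0 := by
    obtain ⟨M, hM⟩ := hL 1
    rw [v.map_eq_of_lt_sub (x := (f M).1), (f M).2.1]
    rw [(f M).2.1, v.map_sub_swap]
    exact WithTop.one_le_iff_pos_of_int.mp (hM M le_rfl)
  refine ⟨L, hL0, eq_of_sub_eq_zero (v.top_iff.mp (WithTop.eq_top_iff_forall_ge.mpr fun N => ?_))⟩
  obtain ⟨M, hM⟩ := hL N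
  set m := max M N.toNat
  have h₁ : (N : WithTop ℤ) ≤ v (L - (f m).1) := v.map_sub_swap L _ ▸ hM m (le_max_left _ _)
  have h₂ : (N : WithTop ℤ) ≤ v ((f m).1 * star (f m).1 - u) :=
    (WithTop.coe_le_coe.mpr (show N ≤ m + 1 by omega)).trans (herr m)
  have : L * star L - u =
      (L - (f m).1) * star L + (f m).1 * star (L - (f m).1) + ((f m).1 * star (f m).1 - u) := by
    rw [star_sub]; ring
  rw [this]
  refine v.map_le_add (v.map_le_add ?_ ?_) h₂
  · rwa [v.map_mul, hv, hL0, add_zero]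
  · rwa [v.map_mul, hv, (f m).2.1, zero_add]

theorem exists_mul_star_eq [Finite (ResidueField v.toValuation.valuationSubring)]
    (hcomplete : v.IsComplete) {u : E} (hu : v u = 0) (hus : star u = u) :
    ∃ w, v w = 0 ∧ w * star w = u :=
  let ⟨_, hw₀, h₀⟩ := exists_mul_star_sub_pos hv hres hu hus
  exists_mul_star_eq_of_approx hv hres hcomplete hus hw₀ h₀

theorem exists_isIntegralUnit_diag_le [Nonempty ι] {A : Matrix ι ι E} (hA : A.IsHermitian) :
    ∃ T : Matrix ι ι E, v.IsIntegralUnit T ∧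
      ∃ i, ∀ k l, v ((T * A * Tᴴ) i i) ≤ v ((T * A * Tᴴ) k l) := by
  obtain ⟨⟨i₀, j₀⟩, hp⟩ := Finite.exists_min fun p : ι × ι => v (A p.1 p.2)
  have hmin : ∀ k l, v (A i₀ j₀) ≤ v (A k l) := fun k l => hp (k, l)
  by_cases hdiag : ∃ i, v (A i i) ≤ v (A i₀ j₀)
  · obtain ⟨i, hi⟩ := hdiag
    exact ⟨1, v.isIntegralUnit_one, i, by simpa using fun k l => hi.trans (hmin k l)⟩
  simp only [not_exists, not_le] at hdiag
  have hne : i₀ ≠ j₀ := fun h => (hdiag i₀).ne (by rw [h])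
  obtain ⟨c, hc, hcb⟩ := exists_map_mul_add_star_eq hv hres (A j₀ i₀)
  have hg : ∀ i, 0 ≤ v ((Pi.single i₀ c : ι → E) i) := fun i => by
    rw [Pi.single_apply]
    split_ifs <;> simp [hc]
  have hT := v.isIntegralUnit_one_add_vecMulVec_single hg
    (Pi.single_eq_of_ne (M := fun _ => E) hne.symm c)
  refine ⟨_, hT, i₀, fun k l =>
    le_trans (le_of_eq ?_) (le_map_mul_mul_conjTranspose_apply hv hT.1 hmin k l)⟩
  have hji : v (A j₀ i₀) = v (A i₀ j₀) := by rw [← hA.apply j₀ i₀, hv]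
  have hrest : v (A j₀ i₀) < v (A i₀ i₀ + c * A j₀ j₀ * star c) := by
    refine hji ▸ v.map_lt_add (hdiag i₀) ?_
    rw [v.map_mul, v.map_mul, hv, hc, zero_add, add_zero]
    exact hdiag j₀
  have : A i₀ i₀ + c * A j₀ i₀ + A i₀ j₀ * star c + c * A j₀ j₀ * star c =
      (c * A j₀ i₀ + star (c * A j₀ i₀)) + (A i₀ i₀ + c * A j₀ j₀ * star c) := by
    rw [star_mul', ← hA.apply j₀ i₀, star_star]
    ring
  rw [one_add_vecMulVec_single_mul_mul_conjTranspose_apply, Pi.single_eq_same, this,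
    v.map_add_eq_of_lt_left (hcb ▸ hrest), hcb, hji]

theorem exists_isIntegralUnit_mul_mul_conjTranspose_eq_cornerBlock {n : ℕ}
    {A : Matrix (Fin (n + 1)) (Fin (n + 1)) E} (hA : A.IsHermitian) (hdet : A.det ≠ 0) :
    ∃ U, v.IsIntegralUnit U ∧ ∃ a B', U * A * Uᴴ = cornerBlock a B' := by
  obtain ⟨T, hT, i, hi⟩ := exists_isIntegralUnit_diag_le hv hres hA
  set P := (Equiv.swap 0 i).permMatrix E
  have hPT := (v.isIntegralUnit_permMatrix (Equiv.swap 0 i)).mul hT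
  set B := P * T * A * (P * T)ᴴ
  have hB : B = (T * A * Tᴴ).submatrix (Equiv.swap 0 i) (Equiv.swap 0 i) := by
    rw [← permMatrix_mul_mul_conjTranspose]
    simp only [B, P, conjTranspose_mul, Matrix.mul_assoc]
  have hmin : ∀ k l, v (B 0 0) ≤ v (B k l) := by
    simpa [hB] using fun k l => hi _ _
  have h0 : B 0 0 ≠ 0 := by
    intro h
    refine hPT.det_mul_mul_conjTranspose_ne_zero hdet ?_
    have : B = 0 := by
      ext k l
      simpa [h] using hmin k l
    change B.det = 0
    rw [this, det_zero]
  obtain ⟨C, hC, B', hCB⟩ :=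
    exists_isIntegralUnit_clear_first_row (isHermitian_mul_mul_conjTranspose _ hA) h0 hmin
  refine ⟨C * (P * T), hC.mul hPT, B 0 0, B', ?_⟩
  rw [← hCB, conjTranspose_mul]
  simp only [Matrix.mul_assoc]

theorem exists_isIntegralUnit_mul_mul_conjTranspose_eq_diagonal :
    ∀ {n : ℕ} {A : Matrix (Fin n) (Fin n) E}, A.IsHermitian → A.det ≠ 0 →
      ∃ U, v.IsIntegralUnit U ∧ ∃ d, U * A * Uᴴ = diagonal d
  | 0, A, _, _ => ⟨1, v.isIntegralUnit_one, 0, Subsingleton.elim _ _⟩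
  | n + 1, A, hA, hdet => by
    obtain ⟨U, hU, a, B, hUA⟩ :=
      exists_isIntegralUnit_mul_mul_conjTranspose_eq_cornerBlock hv hres hA hdet
    have hherm : (cornerBlock a B).IsHermitian := hUA ▸ isHermitian_mul_mul_conjTranspose U hA
    have hB : B.IsHermitian := by
      ext i j
      simpa [conjTranspose_cornerBlock] using congrFun (congrFun hherm i.succ) j.succ
    have hBdet : B.det ≠ 0 := by
      have := hUA ▸ hU.det_mul_mul_conjTranspose_ne_zero hdet
      rw [det_cornerBlock] at this
      exact right_ne_zero_of_mul this
    obtain ⟨U', hU', d, hd⟩ := exists_isIntegralUnit_mul_mul_conjTranspose_eq_diagonal hB hBdet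
    refine ⟨cornerBlock 1 U' * U, (v.isIntegralUnit_cornerBlock_one hU').mul hU, Fin.cons a d, ?_⟩
    calc cornerBlock 1 U' * U * A * (cornerBlock 1 U' * U)ᴴ
        = cornerBlock 1 U' * (U * A * Uᴴ) * (cornerBlock 1 U')ᴴ := by
          simp only [conjTranspose_mul, Matrix.mul_assoc]
      _ = diagonal (Fin.cons a d) := by
          rw [hUA, conjTranspose_cornerBlock, cornerBlock_mul_cornerBlock,
            cornerBlock_mul_cornerBlock, star_one, one_mul, mul_one, hd, cornerBlock_diagonal]

theorem exists_isIntegralUnit_diagonal_mul_mul_conjTranspose_eq_zpow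
    [Finite (ResidueField v.toValuation.valuationSubring)] (hcomplete : v.IsComplete) {π : E}
    (hπ : v π = 1) (hπs : star π = π) {d : ι → E} (hd : ∀ i, d i ≠ 0)
    (hds : ∀ i, star (d i) = d i) :
    ∃ W, v.IsIntegralUnit W ∧ ∃ k : ι → ℤ, W * diagonal d * Wᴴ = diagonal fun i => π ^ k i := by
  have : ∀ i, ∃ k : ℤ, ∃ w, v w = 0 ∧ w * d i * star w = π ^ k := by
    intro i
    obtain ⟨k, hk⟩ := WithTop.ne_top_iff_exists.mp (v.ne_top_iff.mpr (hd i))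
    have hu : v (π ^ k / d i) = 0 := by
      rw [v.map_div, v.map_zpow_eq_of_map_eq_one hπ, ← hk,
        ← WithTop.LinearOrderedAddCommGroup.coe_sub, sub_self]
      rfl
    have hus : star (π ^ k / d i) = π ^ k / d i := by rw [star_div₀, star_zpow₀, hπs, hds]
    obtain ⟨w, hw, hwu⟩ := exists_mul_star_eq hv hres hcomplete hu hus
    exact ⟨k, w, hw, by rw [mul_right_comm, hwu, div_mul_cancel₀ _ (hd i)]⟩
  choose k w hw hwd using this
  refine ⟨diagonal w, v.isIntegralUnit_diagonal hw, k, ?_⟩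
  rw [diagonal_conjTranspose, diagonal_mul_diagonal, diagonal_mul_diagonal]
  exact congrArg diagonal (funext hwd)

theorem exists_isIntegralUnit_mul_mul_conjTranspose_eq_diagonal_zpow
    [Finite (ResidueField v.toValuation.valuationSubring)] (hcomplete : v.IsComplete) {π : E}
    (hπ : v π = 1) (hπs : star π = π) {n : ℕ} {A : Matrix (Fin n) (Fin n) E}
    (hA : A.IsHermitian) (hdet : A.det ≠ 0) :
    ∃ U, v.IsIntegralUnit U ∧
      ∃ k : Fin n → ℤ, Antitone k ∧ U * A * Uᴴ = diagonal fun i => π ^ k i := by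
  obtain ⟨U₀, hU₀, d, hd⟩ :=
    exists_isIntegralUnit_mul_mul_conjTranspose_eq_diagonal hv hres hA hdet
  have hherm : (diagonal d).IsHermitian := hd ▸ isHermitian_mul_mul_conjTranspose U₀ hA
  have hdet' : ∏ i, d i ≠ 0 :=
    det_diagonal (d := d) ▸ hd ▸ hU₀.det_mul_mul_conjTranspose_ne_zero hdet
  obtain ⟨W, hW, k, hk⟩ := exists_isIntegralUnit_diagonal_mul_mul_conjTranspose_eq_zpow hv hres
    hcomplete hπ hπs (fun i => Finset.prod_ne_zero_iff.mp hdet' i (Finset.mem_univ i))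
    fun i => by simpa using hherm.apply i i
  let σ := Tuple.sort (OrderDual.toDual ∘ k)
  refine ⟨σ.permMatrix E * (W * U₀), (v.isIntegralUnit_permMatrix σ).mul (hW.mul hU₀), k ∘ σ,
    monotone_toDual_comp_iff.mp (Tuple.monotone_sort _), ?_⟩
  calc σ.permMatrix E * (W * U₀) * A * (σ.permMatrix E * (W * U₀))ᴴ
      = σ.permMatrix E * (W * (U₀ * A * U₀ᴴ) * Wᴴ) * (σ.permMatrix E)ᴴ := by
        simp only [conjTranspose_mul, Matrix.mul_assoc]
    _ = diagonal fun i => π ^ (k ∘ σ) i := by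
        rw [hd, hk, permMatrix_mul_mul_conjTranspose, submatrix_diagonal_equiv]
        rfl

end Star

end AddValuation

theorem stmt1_general {E : Type} [Field E] (v : E → WithTop ℤ)
    (hv0 : ∀ x, v x = ⊤ ↔ x = 0)
    (hvmul : ∀ x y, v (x * y) = v x + v y)
    (hvadd : ∀ x y, min (v x) (v y) ≤ v (x + y))
    (π : E) (hπ : v π = 1)
    (O : Subring E) (hO : ∀ x, x ∈ O ↔ 0 ≤ v x)
    -- completeness of `E` with respect to `v`
    (hcomplete : ∀ f : ℕ → E,
      (∀ N : ℤ, ∃ M : ℕ, ∀ m₁ m₂ : ℕ, M ≤ m₁ → M ≤ m₂ → (N : WithTop ℤ) ≤ v (f m₁ - f m₂)) →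
      ∃ L : E, ∀ N : ℤ, ∃ M : ℕ, ∀ m₁ : ℕ, M ≤ m₁ → (N : WithTop ℤ) ≤ v (f m₁ - L))
    -- finiteness of the residue field `O/(π)`
    (hfinres : ∃ S : Finset E, ∀ x ∈ O, ∃ y ∈ S, (1 : WithTop ℤ) ≤ v (x - y))
    (σ : E →+* E) (hσinv : ∀ x, σ (σ x) = x)
    (hσO : ∀ x ∈ O, σ x ∈ O) (hσπ : σ π = π)
    -- the induced automorphism of the residue field is not the identity
    (hσres : ∃ x ∈ O, v (σ x - x) ≤ 0)
    (n : ℕ) (A : Matrix (Fin n) (Fin n) E)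
    (hA : (A.map σ).transpose = A) (hdet : A.det ≠ 0) :
    ∃ (U : Matrix (Fin n) (Fin n) E) (lam : ℕ → ℤ),
      (∀ i j, U i j ∈ O) ∧
      (∃ V : Matrix (Fin n) (Fin n) E, (∀ i j, V i j ∈ O) ∧ U * V = 1 ∧ V * U = 1) ∧
      (∀ i j, i ≤ j → j < n → lam j ≤ lam i) ∧
      U * A * (U.map σ).transpose = Matrix.diagonal fun i : Fin n => π ^ lam i.val := by
  have hv1 : v 1 = 0 := WithTop.eq_zero_of_add_self_eq ((hv0 1).not.mpr one_ne_zero)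
    (by rw [← hvmul, one_mul])
  let w := AddValuation.of v ((hv0 0).mpr rfl) hv1 hvadd hvmul
  let _ := StarRing.ofInvolutive σ hσinv
  have hw : ∀ x, w (star x) = w x :=
    w.map_star_eq_of_nonneg hπ hσπ fun x hx => (hO _).mp (hσO x ((hO x).mpr hx))
  have hres : ∃ x, 0 ≤ w x ∧ w (star x - x) ≤ 0 :=
    let ⟨x, hx, h⟩ := hσres
    ⟨x, (hO x).mp hx, h⟩
  have := w.finite_residueField (hfinres.imp fun S hS x hx => hS x ((hO x).mpr hx))
  obtain ⟨U, hU, k, hk, hUA⟩ :=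
    AddValuation.exists_isIntegralUnit_mul_mul_conjTranspose_eq_diagonal_zpow hw hres hcomplete hπ
      hσπ hA hdet
  obtain ⟨V, hV, hUV, hVU⟩ := hU.exists_inv
  refine ⟨U, fun m => if h : m < n then k ⟨m, h⟩ else 0, fun i j => (hO _).mpr (hU.1 i j),
    ⟨V, fun i j => (hO _).mpr (hV i j), hUV, hVU⟩, fun i j hij hj => ?_, ?_⟩
  · simp only [dif_pos hj, dif_pos (hij.trans_lt hj)]
    exact hk hij
  · rw [show (U.map σ).transpose = Uᴴ from rfl, hUA]
    simp

/-- over a non-archimedean local field `E` (fraction field of a complete DVR `O`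
with finite residue field, encoded via the valuation `v`, completeness, and a finite system of
residue representatives), with `σ` an involutive automorphism fixing `π` and preserving `O`
whose induced residue automorphism is nontrivial (so `E` is unramified quadratic over the fixed
field), every nonsingular Hermitian matrix `A = A*` admits `U ∈ GL_n(O)` and integers
`λ₁ ≥ … ≥ λ_n` with `U·A·U* = diag(π^{λ₁}, …, π^{λ_n})`. -/
theorem stmt1 {E : Type} [Field E] (v : E → WithTop ℤ)
    (hv0 : ∀ x, v x = ⊤ ↔ x = 0)
    (hvmul : ∀ x y, v (x * y) = v x + v y)
    (hvadd : ∀ x y, min (v x) (v y) ≤ v (x + y))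
    (π : E) (hπ : v π = 1)
    (O : Subring E) (hO : ∀ x, x ∈ O ↔ 0 ≤ v x)
    -- completeness of `E` with respect to `v`
    (hcomplete : ∀ f : ℕ → E,
      (∀ N : ℤ, ∃ M : ℕ, ∀ m₁ m₂ : ℕ, M ≤ m₁ → M ≤ m₂ → (N : WithTop ℤ) ≤ v (f m₁ - f m₂)) →
      ∃ L : E, ∀ N : ℤ, ∃ M : ℕ, ∀ m₁ : ℕ, M ≤ m₁ → (N : WithTop ℤ) ≤ v (f m₁ - L))
    -- finiteness of the residue field `O/(π)`
    (hfinres : ∃ S : Finset E, ∀ x ∈ O, ∃ y ∈ S, (1 : WithTop ℤ) ≤ v (x - y))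
    (σ : E →+* E) (hσinv : ∀ x, σ (σ x) = x) (hσne : σ ≠ RingHom.id E)
    (hσO : ∀ x ∈ O, σ x ∈ O) (hσπ : σ π = π)
    -- the induced automorphism of the residue field is not the identity
    (hσres : ∃ x ∈ O, v (σ x - x) ≤ 0)
    (n : ℕ) (A : Matrix (Fin n) (Fin n) E)
    (hA : (A.map σ).transpose = A) (hdet : A.det ≠ 0) :
    ∃ (U : Matrix (Fin n) (Fin n) E) (lam : ℕ → ℤ),
      (∀ i j, U i j ∈ O) ∧
      (∃ V : Matrix (Fin n) (Fin n) E, (∀ i j, V i j ∈ O) ∧ U * V = 1 ∧ V * U = 1) ∧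
      (∀ i j, i ≤ j → j < n → lam j ≤ lam i) ∧
      U * A * (U.map σ).transpose = Matrix.diagonal fun i : Fin n => π ^ lam i.val :=
  stmt1_general v hv0 hvmul hvadd π hπ O hO hcomplete hfinres σ hσinv hσO hσπ hσres n A hA hdet
end

section
/- Let k ≥ 1, let D be a (2k−1)×(2k−1) alternating matrix over F, and let α_1, α_2 be column vectors of length 2k−1 over F. Define the 2k×2k matrices D_1 = [[0, α_1ᵀ],[−α_1, D]], D_2 = [[0, α_2ᵀ],[−α_2, D]], and D_{12} = [[0, (α_1+α_2)ᵀ],[−(α_1+α_2), D]] (block matrices with upper-left 1×1 block). Then there exists s ∈ F such that s² = det(D_1)·det(D_2) and det(D_{12}) = det(D_1) + det(D_2) + 2s. -/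
/-- The `2k × 2k` matrix `[[0, αᵀ], [−α, D]]` (upper-left block `1 × 1`). -/
def borderAlt {F : Type} [Field F] {p : ℕ} (D : Matrix (Fin p) (Fin p) F) (α : Fin p → F) :
    Matrix (Fin 1 ⊕ Fin p) (Fin 1 ⊕ Fin p) F :=
  Matrix.fromBlocks 0 (Matrix.of fun _ j => α j) (Matrix.of fun i _ => -α i) D

/-!
For fixed `D`, `B(x, y) = det [[0, xᵀ], [−y, D]]` is bilinear by row and column linearity of the
determinant, and it is symmetric because transposing the bordered matrix turns it into the negative
of the one for `(y, x)`, a matrix of even size. Hence `det D₁₂ = det D₁ + det D₂ + 2 B(α₁, α₂)`,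
and it remains to see that `B(α₁, α₂)² = B(α₁, α₁) B(α₂, α₂)`, which holds for every symmetric
form of rank at most one.

An alternating matrix of odd size is singular, and a column operation then shows `B(x, D z) = 0`,
so the range of `D` lies in the radical of `B`. If `D` has corank one, this bounds the rank of `B`
by one. If its corank is at least two, for every `x` some nonzero `v ∈ ker D` satisfies `x ⬝ᵥ v = 0`,
and `(0, v)` lies in the kernel of the bordered matrix, so `B = 0`.
-/

open Matrix Module

theorem Matrix.det_eq_zero_of_transpose_eq_neg_of_odd_card {R n : Type*} [CommRing R] [Fintype n]
    [DecidableEq n] {A : Matrix n n R} (hA : Aᵀ = -A) (hdiag : ∀ i, A i i = 0)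
    (hn : Odd (Fintype.card n)) : A.det = 0 := by
  have hneg : ∀ i j, A i j = -A j i := fun i j => by
    simpa using congrFun (congrFun hA j) i
  -- pairing `σ` with `σ⁻¹` in the Leibniz expansion also works in characteristic two, where
  -- `det Aᵀ = -det A` says nothing
  rw [det_apply]
  refine Finset.sum_ninvolution (fun σ => σ⁻¹) (fun σ => ?_) (fun σ hσ hinv => hσ ?_)
    (fun _ => Finset.mem_univ _) inv_inv
  · have hprod : ∏ i, A (σ⁻¹ i) i = -∏ i, A (σ i) i := calc
      ∏ i, A (σ⁻¹ i) i = ∏ i, A i (σ i) := by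
        simpa using (Equiv.prod_comp σ fun i => A (σ⁻¹ i) i).symm
      _ = ∏ i, (-1) * A (σ i) i := by simp only [hneg _ (σ _), neg_one_mul]
      _ = -∏ i, A (σ i) i := by
        rw [Finset.prod_mul_distrib, Finset.prod_const, Finset.card_univ, hn.neg_one_pow,
          neg_one_mul]
    rw [Equiv.Perm.sign_inv, hprod, smul_neg, add_neg_cancel]
  · -- a fixed-point-free involution of `n` would force `card n` to be even
    obtain ⟨i, hi⟩ : ∃ i, σ i = i := by
      by_contra! hfree
      have hsq : σ ^ 2 = 1 := by rw [sq]; nth_rw 1 [← hinv]; exact inv_mul_cancel σ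
      have hsupp : σ.support = Finset.univ :=
        Finset.eq_univ_of_forall fun i => by simpa using hfree i
      have := Equiv.Perm.two_dvd_card_support hsq
      rw [hsupp, Finset.card_univ] at this
      exact Nat.not_even_iff_odd.2 hn (even_iff_two_dvd.2 this)
    rw [Finset.prod_eq_zero (Finset.mem_univ i) (by rw [hi, hdiag]), smul_zero]

theorem LinearMap.BilinForm.IsSymm.apply_sq_eq_of_finrank_range_le_one {F V : Type*} [Field F]
    [AddCommGroup V] [Module F V] [FiniteDimensional F V] {B : LinearMap.BilinForm F V}
    (hB : B.IsSymm) (h : finrank F (LinearMap.range B) ≤ 1) (x y : V) :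
    B x y ^ 2 = B x x * B y y := by
  rw [← B.quotKerEquivRange.finrank_eq] at h
  obtain ⟨q, hq⟩ := finrank_le_one_iff.1 h
  obtain ⟨u, rfl⟩ := Submodule.mkQ_surjective _ q
  have hmultiple : ∀ v, ∃ c : F, B v = c • B u := fun v => by
    obtain ⟨c, hc⟩ := hq (Submodule.mkQ _ v)
    refine ⟨c, (sub_eq_zero.1 ?_).symm⟩
    rw [← map_smul, ← map_sub, ← LinearMap.mem_ker, ← Submodule.Quotient.eq]
    simpa using hc
  obtain ⟨a, ha⟩ := hmultiple x
  obtain ⟨b, hb⟩ := hmultiple y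
  calc B x y ^ 2 = B x y * B y x := by rw [sq, hB.eq y x]
    _ = B x x * B y y := by
      simp only [ha, hb, LinearMap.smul_apply, smul_eq_mul]
      ring

lemma Sum.elim_zero_smul {R M m n : Type*} [Zero M] [SMulZeroClass R M] (c : R) (x : n → M) :
    Sum.elim (0 : m → M) (c • x) = c • Sum.elim (0 : m → M) x := by
  ext (i | i) <;> simp

section Border

variable {R n : Type*} [CommRing R] [Fintype n] [DecidableEq n]

def borderMatrix (D : Matrix n n R) (x y : n → R) : Matrix (Fin 1 ⊕ n) (Fin 1 ⊕ n) R :=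
  fromBlocks 0 (replicateRow (Fin 1) x) (replicateCol (Fin 1) (-y)) D

omit [Fintype n] in
lemma borderMatrix_eq_updateRow (D : Matrix n n R) (x y : n → R) :
    borderMatrix D x y = (borderMatrix D 0 y).updateRow (Sum.inl 0) (Sum.elim 0 x) := by
  ext (i | i) (j | j) <;> simp [borderMatrix, Fin.fin_one_eq_zero, updateRow_apply]

omit [Fintype n] in
lemma borderMatrix_eq_updateCol (D : Matrix n n R) (x y : n → R) :
    borderMatrix D x y = (borderMatrix D x 0).updateCol (Sum.inl 0) (Sum.elim 0 (-y)) := by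
  ext (i | i) (j | j) <;> simp [borderMatrix, Fin.fin_one_eq_zero]

variable (R) in
def borderForm (D : Matrix n n R) : LinearMap.BilinForm R (n → R) :=
  LinearMap.mk₂ R (fun x y => (borderMatrix D x y).det)
    (fun x₁ x₂ y => by
      rw [borderMatrix_eq_updateRow D (x₁ + x₂), borderMatrix_eq_updateRow D x₁,
        borderMatrix_eq_updateRow D x₂, ← det_updateRow_add, ← Sum.elim_add_add, add_zero])
    (fun c x y => by
      rw [borderMatrix_eq_updateRow D (c • x), borderMatrix_eq_updateRow D x, Sum.elim_zero_smul,
        det_updateRow_smul, smul_eq_mul])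
    (fun x y₁ y₂ => by
      rw [borderMatrix_eq_updateCol D x (y₁ + y₂), borderMatrix_eq_updateCol D x y₁,
        borderMatrix_eq_updateCol D x y₂, ← det_updateCol_add, ← Sum.elim_add_add, add_zero,
        neg_add])
    (fun c x y => by
      rw [borderMatrix_eq_updateCol D x (c • y), borderMatrix_eq_updateCol D x y, ← smul_neg,
        Sum.elim_zero_smul, det_updateCol_smul, smul_eq_mul])

lemma borderForm_apply (D : Matrix n n R) (x y : n → R) :
    borderForm R D x y = (borderMatrix D x y).det :=
  rfl

lemma borderForm_isSymm {D : Matrix n n R} (hD : Dᵀ = -D) (hn : Odd (Fintype.card n)) :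
    (borderForm R D).IsSymm := by
  refine LinearMap.BilinForm.isSymm_def.2 fun x y => ?_
  have htranspose : (borderMatrix D x y)ᵀ = -borderMatrix D y x := by
    rw [borderMatrix, borderMatrix, fromBlocks_transpose, fromBlocks_neg, hD]
    congr 1 <;> ext <;> simp
  have heven : Even (Fintype.card (Fin 1 ⊕ n)) := by
    simpa [add_comm] using hn.add_one
  rw [borderForm_apply, borderForm_apply, ← det_transpose, htranspose, det_neg,
    heven.neg_one_pow, one_mul]

lemma borderForm_mulVec_right {D : Matrix n n R} (hdet : D.det = 0) (x z : n → R) :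
    borderForm R D x (D *ᵥ z) = 0 := by
  set T : Matrix (Fin 1 ⊕ n) (Fin 1 ⊕ n) R := fromBlocks 1 0 (replicateCol (Fin 1) z) 1
  have hT : T.det = 1 := by simp [T]
  have hmul : borderMatrix D x (D *ᵥ z) * T =
      fromBlocks (of fun _ _ => x ⬝ᵥ z) (replicateRow (Fin 1) x) 0 D := by
    simp only [borderMatrix, T, fromBlocks_multiply, ← replicateCol_mulVec]
    congr 1 <;> ext <;> simp [replicateRow_mulVec_eq_const]
  rw [borderForm_apply, ← mul_one (det _), ← hT, ← det_mul, hmul, det_fromBlocks_zero₂₁, hdet,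
    mul_zero]

end Border

section Rank

variable {F n : Type*} [Field F] [Fintype n] [DecidableEq n]

lemma borderForm_eq_zero_of_two_le_finrank_ker {D : Matrix n n F}
    (h : 2 ≤ finrank F (LinearMap.ker D.mulVecLin)) : borderForm F D = 0 := by
  refine LinearMap.ext₂ fun x y => ?_
  set K := LinearMap.ker D.mulVecLin
  have hker : LinearMap.ker ((dotProductBilin F F x).domRestrict K) ≠ ⊥ :=
    LinearMap.ker_ne_bot_of_finrank_lt (by rw [finrank_self]; omega)
  obtain ⟨⟨v, hvK⟩, hxv, hv0⟩ := Submodule.exists_mem_ne_zero_of_ne_bot hker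
  rw [LinearMap.zero_apply, LinearMap.zero_apply, borderForm_apply, ← exists_mulVec_eq_zero_iff]
  refine ⟨Sum.elim 0 v, ?_, ?_⟩
  · simpa [funext_iff] using hv0
  · simp only [LinearMap.mem_ker, LinearMap.domRestrict_apply, dotProductBilin_apply_apply] at hxv
    rw [LinearMap.mem_ker, mulVecLin_apply] at hvK
    simp [borderMatrix, fromBlocks_mulVec, replicateRow_mulVec_eq_const, hxv, hvK]

lemma finrank_range_borderForm_le_one {D : Matrix n n F} (hD : Dᵀ = -D) (hdiag : ∀ i, D i i = 0)
    (hn : Odd (Fintype.card n)) : finrank F (LinearMap.range (borderForm F D)) ≤ 1 := by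
  by_cases hker : 2 ≤ finrank F (LinearMap.ker D.mulVecLin)
  · rw [borderForm_eq_zero_of_two_le_finrank_ker hker, LinearMap.range_zero, finrank_bot]
    exact zero_le_one
  have hdet : D.det = 0 := det_eq_zero_of_transpose_eq_neg_of_odd_card hD hdiag hn
  have hrange : LinearMap.range D.mulVecLin ≤ LinearMap.ker (borderForm F D) := by
    rintro _ ⟨z, rfl⟩
    refine LinearMap.mem_ker.2 (LinearMap.ext fun y => ?_)
    rw [mulVecLin_apply, (borderForm_isSymm hD hn).eq, borderForm_mulVec_right hdet,
      LinearMap.zero_apply]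
  have hrankB := (borderForm F D).finrank_range_add_finrank_ker
  have hrankD := D.mulVecLin.finrank_range_add_finrank_ker
  have := Submodule.finrank_mono hrange
  omega

end Rank

/-- for an alternating `(2k−1) × (2k−1)` matrix `D` over a field `F` and column
vectors `α₁, α₂`, with `D₁ = [[0, α₁ᵀ],[−α₁, D]]`, `D₂ = [[0, α₂ᵀ],[−α₂, D]]` and
`D₁₂ = [[0, (α₁+α₂)ᵀ],[−(α₁+α₂), D]]`, there is `s ∈ F` with `s² = det D₁ · det D₂` and
`det D₁₂ = det D₁ + det D₂ + 2s`. -/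
theorem stmt5 {F : Type} [Field F] (k : ℕ) (hk : 1 ≤ k)
    (D : Matrix (Fin (2 * k - 1)) (Fin (2 * k - 1)) F)
    (hDalt : D.transpose = -D) (hDdiag : ∀ i, D i i = 0)
    (a1 a2 : Fin (2 * k - 1) → F) :
    ∃ s : F,
      s ^ 2 = (borderAlt D a1).det * (borderAlt D a2).det ∧
      (borderAlt D (a1 + a2)).det = (borderAlt D a1).det + (borderAlt D a2).det + 2 * s := by
  have hodd : Odd (Fintype.card (Fin (2 * k - 1))) := by
    rw [Fintype.card_fin]
    exact ⟨k - 1, by omega⟩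
  have hB := borderForm_isSymm hDalt hodd
  have hdet (a : Fin (2 * k - 1) → F) : (borderAlt D a).det = borderForm F D a a := rfl
  refine ⟨borderForm F D a1 a2, ?_, ?_⟩
  · rw [hdet, hdet]
    exact hB.apply_sq_eq_of_finrank_range_le_one
      (finrank_range_borderForm_le_one hDalt hDdiag hodd) a1 a2
  · simp only [hdet, map_add, LinearMap.add_apply, hB.eq a2 a1]
    ring
end

section
/- Let k be a finite field with q elements and n ≥ 1. Then the number of invertible alternating 2n×2n matrices over k equals q^{n(2n−1)} · ∏_{i=1}^{n} (1 − q^{1−2i}); equivalently, since the total number of alternating 2n×2n matrices over k is q^{n(2n−1)}, the proportion of alternating 2n×2n matrices over k that are invertible is ∏_{i=1}^{n} (1 − q^{1−2i}). -/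
/-!
An invertible alternating matrix of size `m` has a nonzero first row `v` with `v 0 = 0`; there
are `q ^ (m - 1) - 1` such rows. Congruence `A ↦ Pᵀ * A * P` by an invertible `P` with
`P e₀ = e₀` sends first row `w` to `w * P`, and these `P` act transitively on the admissible rows,
so every admissible row is the first row of as many invertible alternating matrices as `e₁` is.
An alternating matrix with first row `e₁` has the block form `[[J, B], [-Bᵀ, D]]` with
`J = [[0, 1], [-1, 0]]` and `B` vanishing outside its second row, and its determinant is `det D`.
So the number `N m` of invertible alternating `m × m` matrices satisfies
`N (m + 2) = (q ^ (m + 1) - 1) * q ^ m * N m`. All alternating matrices are counted by their free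
entries above the diagonal.
-/

theorem card_apply_eq_zero_and_ne_zero {ι M : Type*} [Fintype ι] [Zero M] [Fintype M] (i : ι) :
    Nat.card {v : ι → M // v i = 0 ∧ v ≠ 0} = Fintype.card M ^ (Fintype.card ι - 1) - 1 := by
  classical
  rw [Nat.card_eq_fintype_card, Fintype.card_subtype, ← Finset.filter_filter, Finset.filter_ne',
    Finset.card_erase_of_mem (by simp), ← Fintype.piFinset_univ]
  convert congrArg (· - 1)
    (Fintype.card_filter_piFinset_const_eq_of_mem _ i (Finset.mem_univ (0 : M))) using 3
  exact Finset.card_univ.symm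

theorem pow_mul_prod_one_sub_zpow {K : Type*} [Field K] {x : K} (hx : x ≠ 0) (n : ℕ) :
    x ^ (n * (2 * n - 1)) * ∏ i ∈ Finset.range n, (1 - x ^ (1 - 2 * ((i : ℤ) + 1))) =
      ∏ i ∈ Finset.range n, (x ^ (2 * i + 1) - 1) * x ^ (2 * i) := by
  induction n with
  | zero => simp
  | succ n ih =>
    have hexp : (n + 1) * (2 * (n + 1) - 1) = n * (2 * n - 1) + (2 * n + 1) + 2 * n := by
      rcases n with _ | n
      · rfl
      · rw [show 2 * (n + 1 + 1) - 1 = 2 * n + 3 by omega,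
          show 2 * (n + 1) - 1 = 2 * n + 1 by omega]
        ring
    have hfactor : x ^ (2 * n + 1) * (1 - x ^ (1 - 2 * ((n : ℤ) + 1))) = x ^ (2 * n + 1) - 1 := by
      rw [mul_sub, mul_one, ← zpow_natCast, ← zpow_add₀ hx,
        show ((2 * n + 1 : ℕ) : ℤ) + (1 - 2 * (n + 1)) = 0 by push_cast; ring, zpow_zero]
    rw [Finset.prod_range_succ, Finset.prod_range_succ, ← ih, hexp, pow_add, pow_add, ← hfactor]
    ring

namespace Matrix

variable {ι ι' R : Type*}

def IsAlt [Neg R] [Zero R] (A : Matrix ι ι R) : Prop := Aᵀ = -A ∧ ∀ i, A i i = 0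

section AddGroup

variable [AddGroup R] {A : Matrix ι ι R}

theorem IsAlt.apply_eq_neg (hA : A.IsAlt) (i j : ι) : A j i = -A i j := by
  simpa using congrFun (congrFun hA.1 i) j

theorem IsAlt.submatrix (hA : A.IsAlt) (f : ι' → ι) : (A.submatrix f f).IsAlt :=
  ⟨by rw [transpose_submatrix, hA.1]; rfl, fun i => hA.2 (f i)⟩

theorem isAlt_submatrix_equiv_iff (e : ι' ≃ ι) : (A.submatrix e e).IsAlt ↔ A.IsAlt :=
  ⟨fun h => by simpa using h.submatrix e.symm, fun h => h.submatrix e⟩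

theorem IsAlt.fromBlocks {D : Matrix ι' ι' R} (hA : A.IsAlt) (hD : D.IsAlt) (B : Matrix ι ι' R) :
    (fromBlocks A B (-Bᵀ) D).IsAlt := by
  refine ⟨?_, ?_⟩
  · rw [fromBlocks_transpose, fromBlocks_neg, hA.1, hD.1, transpose_neg, transpose_transpose,
      neg_neg]
  · rintro (i | i)
    exacts [hA.2 i, hD.2 i]

def isAltEquivStrictUpper [LinearOrder ι] :
    {A : Matrix ι ι R // A.IsAlt} ≃ ({p : ι × ι // p.1 < p.2} → R) where
  toFun A p := A.1 p.1.1 p.1.2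
  invFun f := ⟨of fun i j =>
      if h : i < j then f ⟨(i, j), h⟩ else if h' : j < i then -f ⟨(j, i), h'⟩ else 0, by
    refine ⟨?_, fun i => by simp⟩
    ext i j
    rcases lt_trichotomy i j with h | rfl | h
    · simp [h, h.not_gt]
    · simp
    · simp [h, h.not_gt]⟩
  left_inv A := by
    ext i j
    rcases lt_trichotomy i j with h | rfl | h
    · simp [h]
    · simp [A.2.2 i]
    · simp [h, h.not_gt, ← A.2.apply_eq_neg]
  right_inv f := by
    funext p
    simp [p.2]

theorem card_isAlt [Fintype ι] [LinearOrder ι] :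
    Nat.card {A : Matrix ι ι R // A.IsAlt} = Nat.card R ^ (Fintype.card ι).choose 2 := by
  rw [Nat.card_congr isAltEquivStrictUpper, Nat.card_fun,
    Nat.card_eq_fintype_card (α := {p : ι × ι // _}), Fintype.card_subtype,
    Fintype.card_product_filter_lt]

end AddGroup

section CommRing

variable [CommRing R] {A : Matrix ι ι R}

theorem IsAlt.dotProduct_mulVec_self [Fintype ι] (hA : A.IsAlt) (x : ι → R) :
    x ⬝ᵥ A *ᵥ x = 0 := by
  have hsum : x ⬝ᵥ A *ᵥ x = ∑ p : ι × ι, x p.1 * A p.1 p.2 * x p.2 := by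
    simp [dotProduct, mulVec, Finset.mul_sum, mul_assoc, ← Finset.sum_product']
  rw [hsum]
  refine Finset.sum_ninvolution Prod.swap (fun p => ?_) (fun p hp hswap => ?_) (by simp) (by simp)
  · simp only [Prod.fst_swap, Prod.snd_swap, hA.apply_eq_neg p.1 p.2]
    ring
  · obtain ⟨i, j⟩ := p
    obtain rfl : i = j := by simpa [Prod.ext_iff, eq_comm] using hswap
    simp [hA.2] at hp

theorem IsAlt.transpose_mul_mul [Fintype ι] (hA : A.IsAlt) (P : Matrix ι ι' R) :
    (Pᵀ * A * P).IsAlt := by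
  refine ⟨by simp [Matrix.mul_assoc, hA.1], fun i => ?_⟩
  have := hA.dotProduct_mulVec_self (fun a => P a i)
  simp only [dotProduct, mulVec, Finset.mul_sum] at this
  simp only [mul_apply, transpose_apply, Finset.sum_mul]
  rw [Finset.sum_comm]
  simpa [mul_assoc] using this

theorem transpose_mul_mul_apply_of_mulVec_single [Fintype ι] [DecidableEq ι] {P : Matrix ι ι R}
    {i : ι} (hP : P *ᵥ Pi.single i 1 = Pi.single i 1) (A : Matrix ι ι R) :
    (Pᵀ * A * P) i = A i ᵥ* P := by
  have hcol : Pᵀ i = Pi.single i 1 := by rw [← hP, mulVec_single_one]; rfl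
  rw [mul_apply_eq_vecMul, mul_apply_eq_vecMul, hcol, single_one_vecMul]
  rfl

theorem det_updateRow_one [Fintype ι] [DecidableEq ι] (i : ι) (v : ι → R) :
    ((1 : Matrix ι ι R).updateRow i v).det = v i := by
  have hv : ∑ j, v j • (1 : Matrix ι ι R) j = v := by
    ext a
    simp [one_apply]
  simpa [hv] using det_updateRow_sum (1 : Matrix ι ι R) i v

def altExtend (b : ι' → R) (D : Matrix ι' ι' R) : Matrix (Fin 2 ⊕ ι') (Fin 2 ⊕ ι') R :=
  fromBlocks !![0, 1; -1, 0] (of ![0, b]) (-(of ![0, b])ᵀ) D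

theorem isAlt_altExtend {D : Matrix ι' ι' R} (hD : D.IsAlt) (b : ι' → R) :
    (altExtend b D).IsAlt := by
  refine IsAlt.fromBlocks ⟨?_, fun i => by fin_cases i <;> rfl⟩ hD _
  ext i j
  fin_cases i <;> fin_cases j <;> simp

theorem det_altExtend [Fintype ι'] [DecidableEq ι'] (b : ι' → R) (D : Matrix ι' ι' R) :
    (altExtend b D).det = D.det := by
  let _ : Invertible (!![0, 1; -1, 0] : Matrix (Fin 2) (Fin 2) R) :=
    ⟨!![0, -1; 1, 0], by simp [← Matrix.ext_iff, Fin.forall_fin_two],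
      by simp [← Matrix.ext_iff, Fin.forall_fin_two]⟩
  -- `Bᵀ * J⁻¹ * B = 0` since `B` lives in its second row and `J⁻¹ 1 1 = 0`
  have hSchur :
      -(of ![0, b])ᵀ * ⅟(!![0, 1; -1, 0] : Matrix (Fin 2) (Fin 2) R) * of ![0, b] = 0 := by
    change -(of ![0, b])ᵀ * !![0, -1; 1, 0] * of ![0, b] = 0
    ext i j
    simp [mul_apply, Fin.sum_univ_two]
  rw [altExtend, det_fromBlocks₁₁, hSchur, sub_zero, det_fin_two_of]
  simp

theorem altExtend_apply_inl_zero [DecidableEq ι'] (b : ι' → R) (D : Matrix ι' ι' R) :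
    altExtend b D (.inl 0) = Pi.single (.inl 1) 1 := by
  ext (j | j)
  · fin_cases j <;> simp [altExtend]
  · simp [altExtend]

theorem IsAlt.eq_altExtend [DecidableEq ι'] {A : Matrix (Fin 2 ⊕ ι') (Fin 2 ⊕ ι') R}
    (hA : A.IsAlt) (h : A (.inl 0) = Pi.single (.inl 1) 1) :
    A = altExtend (fun j => A (.inl 1) (.inr j)) A.toBlocks₂₂ := by
  have hrow := congrFun h
  ext (i | i) (j | j)
  · revert i j
    simp only [Fin.forall_fin_two]
    refine ⟨⟨?_, ?_⟩, ?_, ?_⟩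
    · simpa [altExtend] using hA.2 (.inl 0)
    · simpa [altExtend] using hrow (.inl 1)
    · rw [hA.apply_eq_neg (.inl 0)]
      simpa [altExtend] using hrow (.inl 1)
    · simpa [altExtend] using hA.2 (.inl 1)
  · revert i
    simp only [Fin.forall_fin_two]
    exact ⟨by simpa [altExtend] using hrow (.inr j), by simp [altExtend]⟩
  · revert j
    simp only [Fin.forall_fin_two]
    refine ⟨?_, by simp [altExtend, hA.apply_eq_neg (.inl 1) (.inr i)]⟩
    rw [hA.apply_eq_neg (.inl 0)]
    simpa [altExtend] using hrow (.inr i)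
  · rfl

end CommRing

section Field

variable {k : Type*} [Field k] [Fintype ι] [DecidableEq ι]

variable (ι k) in
abbrev NondegAlt : Type _ := {A : Matrix ι ι k // A.IsAlt ∧ A.det ≠ 0}

def nondegAltCongr (P : (Matrix ι ι k)ˣ) : NondegAlt ι k ≃ NondegAlt ι k where
  toFun A := ⟨(P : Matrix ι ι k)ᵀ * A.1 * P, A.2.1.transpose_mul_mul _, by
    have hP := (isUnits_det_units P).ne_zero
    rw [det_mul, det_mul, det_transpose]
    exact mul_ne_zero (mul_ne_zero hP A.2.2) hP⟩
  invFun A := ⟨(↑P⁻¹ : Matrix ι ι k)ᵀ * A.1 * ↑P⁻¹, A.2.1.transpose_mul_mul _, by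
    have hP := (isUnits_det_units P⁻¹).ne_zero
    rw [det_mul, det_mul, det_transpose]
    exact mul_ne_zero (mul_ne_zero hP A.2.2) hP⟩
  left_inv A := by
    ext1
    simp only [← Matrix.mul_assoc, ← transpose_mul, Units.mul_inv, transpose_one, Matrix.one_mul]
    simp [Matrix.mul_assoc]
  right_inv A := by
    ext1
    simp only [← Matrix.mul_assoc, ← transpose_mul, Units.inv_mul, transpose_one, Matrix.one_mul]
    simp [Matrix.mul_assoc]

def nondegAltRowEquiv (P : (Matrix ι ι k)ˣ) {i : ι}
    (hP : (P : Matrix ι ι k) *ᵥ Pi.single i 1 = Pi.single i 1) (w : ι → k) :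
    {A : NondegAlt ι k // A.1 i = w} ≃ {A : NondegAlt ι k // A.1 i = w ᵥ* P} :=
  (nondegAltCongr P).subtypeEquiv fun A => by
    simp only [nondegAltCongr, Equiv.coe_fn_mk, transpose_mul_mul_apply_of_mulVec_single hP]
    exact (vecMul_injective_of_isUnit P.isUnit).eq_iff.symm

theorem exists_unit_mulVec_single_and_single_vecMul {i j : ι} (hij : i ≠ j) {v : ι → k}
    (hvi : v i = 0) (hv : v ≠ 0) :
    ∃ P : (Matrix ι ι k)ˣ, (P : Matrix ι ι k) *ᵥ Pi.single i 1 = Pi.single i 1 ∧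
      Pi.single j 1 ᵥ* (P : Matrix ι ι k) = v := by
  obtain ⟨l, hl⟩ := Function.ne_iff.mp hv
  have hli : l ≠ i := fun h => hl (h ▸ hvi)
  set P := ((1 : Matrix ι ι k).updateRow l v).submatrix (Equiv.swap j l) id
  have hP : IsUnit P := by
    rw [isUnit_iff_isUnit_det, det_permute, det_updateRow_one]
    exact (Units.isUnit _).map (Int.castRingHom k) |>.mul (isUnit_iff_ne_zero.mpr hl)
  refine ⟨hP.unit, ?_, ?_⟩ <;> rw [IsUnit.unit_spec]
  · ext a
    simp only [P, mulVec_single_one, col_apply, submatrix_apply, id, updateRow_apply, hvi,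
      one_apply, Pi.single_apply, Equiv.swap_apply_def]
    grind
  · ext b
    simp [P, updateRow_apply]

def nondegAltFiberEquiv [Fintype ι'] [DecidableEq ι'] :
    {A : NondegAlt (Fin 2 ⊕ ι') k // A.1 (.inl 0) = Pi.single (.inl 1) 1} ≃
      (ι' → k) × NondegAlt ι' k where
  toFun A := (fun j => A.1.1 (.inl 1) (.inr j), ⟨A.1.1.toBlocks₂₂, A.1.2.1.submatrix Sum.inr, by
    rw [← det_altExtend (fun j => A.1.1 (.inl 1) (.inr j)), ← A.1.2.1.eq_altExtend A.2]
    exact A.1.2.2⟩)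
  invFun p := ⟨⟨altExtend p.1 p.2.1, isAlt_altExtend p.2.2.1 p.1, by
    rw [det_altExtend]
    exact p.2.2.2⟩, altExtend_apply_inl_zero p.1 p.2.1⟩
  left_inv A := Subtype.ext <| Subtype.ext (A.1.2.1.eq_altExtend A.2).symm
  right_inv p :=
    Prod.ext (funext fun j => by simp [altExtend]) (Subtype.ext (toBlocks_fromBlocks₂₂ ..))

theorem card_nondegAlt_congr [Fintype ι'] [DecidableEq ι'] (e : ι ≃ ι') :
    Nat.card (NondegAlt ι k) = Nat.card (NondegAlt ι' k) :=
  Nat.card_congr <| (reindex e e).subtypeEquiv fun A => by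
    rw [reindex_apply, isAlt_submatrix_equiv_iff, det_submatrix_equiv_self]

theorem card_nondegAlt_of_isEmpty [IsEmpty ι] : Nat.card (NondegAlt ι k) = 1 :=
  Nat.card_eq_one_iff_exists.mpr
    ⟨⟨0, ⟨Subsingleton.elim _ _, isEmptyElim⟩, by simp⟩, fun _ => Subsingleton.elim _ _⟩

variable [Fintype k]

theorem card_nondegAlt_eq_mul {i j : ι} (hij : i ≠ j) :
    Nat.card (NondegAlt ι k) = Nat.card {v : ι → k // v i = 0 ∧ v ≠ 0} *
      Nat.card {A : NondegAlt ι k // A.1 i = Pi.single j 1} := by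
  classical
  let row (A : NondegAlt ι k) : {v : ι → k // v i = 0 ∧ v ≠ 0} :=
    ⟨A.1 i, A.2.1.2 i, fun h => A.2.2 (det_eq_zero_of_row_eq_zero i (congrFun h))⟩
  have hfiber (v : {v : ι → k // v i = 0 ∧ v ≠ 0}) :
      Nat.card {A // row A = v} = Nat.card {A : NondegAlt ι k // A.1 i = Pi.single j 1} := by
    obtain ⟨P, hPi, hPj⟩ := exists_unit_mulVec_single_and_single_vecMul hij v.2.1 v.2.2
    calc Nat.card {A // row A = v} = Nat.card {A : NondegAlt ι k // A.1 i = v} :=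
          Nat.card_congr (Equiv.subtypeEquivRight fun A => Subtype.ext_iff)
      _ = Nat.card {A : NondegAlt ι k // A.1 i = Pi.single j 1 ᵥ* P} := by rw [hPj]
      _ = _ := (Nat.card_congr (nondegAltRowEquiv P hPi _)).symm
  rw [← Nat.card_congr (Equiv.sigmaFiberEquiv row), Nat.card_sigma,
    Finset.sum_congr rfl fun v _ => hfiber v, Finset.sum_const, Finset.card_univ, smul_eq_mul,
    Nat.card_eq_fintype_card (α := {v : ι → k // _})]

theorem card_nondegAlt_fin_two_sum [Fintype ι'] [DecidableEq ι'] :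
    Nat.card (NondegAlt (Fin 2 ⊕ ι') k) = (Fintype.card k ^ (Fintype.card ι' + 1) - 1) *
      (Fintype.card k ^ Fintype.card ι' * Nat.card (NondegAlt ι' k)) := by
  have hcard : Fintype.card (Fin 2 ⊕ ι') - 1 = Fintype.card ι' + 1 := by simp; omega
  rw [card_nondegAlt_eq_mul (i := .inl 0) (j := .inl 1) (by simp),
    card_apply_eq_zero_and_ne_zero, hcard, Nat.card_congr nondegAltFiberEquiv, Nat.card_prod,
    Nat.card_fun, Nat.card_eq_fintype_card (α := k), Nat.card_eq_fintype_card (α := ι')]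

theorem card_nondegAlt_fin_two_mul (n : ℕ) :
    Nat.card (NondegAlt (Fin (2 * n)) k) =
      ∏ i ∈ Finset.range n, (Fintype.card k ^ (2 * i + 1) - 1) * Fintype.card k ^ (2 * i) := by
  induction n with
  | zero =>
    have : IsEmpty (Fin (2 * 0)) := Fin.isEmpty'
    exact card_nondegAlt_of_isEmpty
  | succ n ih =>
    rw [card_nondegAlt_congr ((finCongr (by ring)).trans finSumFinEquiv.symm :
        Fin (2 * (n + 1)) ≃ Fin 2 ⊕ Fin (2 * n)),
      card_nondegAlt_fin_two_sum, ih, Fintype.card_fin, Finset.prod_range_succ]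
    ring

end Field

end Matrix

theorem stmt7_general {k : Type} [Field k] [Fintype k] (n : ℕ) :
    Nat.card {A : Matrix (Fin (2 * n)) (Fin (2 * n)) k //
        A.transpose = -A ∧ ∀ i, A i i = 0}
      = Fintype.card k ^ (n * (2 * n - 1)) ∧
    (Nat.card {A : Matrix (Fin (2 * n)) (Fin (2 * n)) k //
        (A.transpose = -A ∧ ∀ i, A i i = 0) ∧ A.det ≠ 0} : ℚ)
      = (Fintype.card k : ℚ) ^ (n * (2 * n - 1)) *
        ∏ i ∈ Finset.range n, (1 - (Fintype.card k : ℚ) ^ (1 - 2 * ((i : ℤ) + 1))) := by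
  have hq : (Fintype.card k : ℚ) ≠ 0 := Nat.cast_ne_zero.mpr Fintype.card_ne_zero
  constructor
  · change Nat.card {A : Matrix (Fin (2 * n)) (Fin (2 * n)) k // A.IsAlt} = _
    rw [Matrix.card_isAlt, Fintype.card_fin, Nat.choose_two_right,
      Nat.mul_assoc, Nat.mul_div_cancel_left _ two_pos, Nat.card_eq_fintype_card]
  · rw [pow_mul_prod_one_sub_zpow hq]
    change (Nat.card (Matrix.NondegAlt (Fin (2 * n)) k) : ℚ) = _
    rw [Matrix.card_nondegAlt_fin_two_mul, Nat.cast_prod]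
    refine Finset.prod_congr rfl fun i _ => ?_
    rw [Nat.cast_mul, Nat.cast_sub (Nat.one_le_pow _ _ Fintype.card_pos)]
    push_cast
    ring

/-- over a finite field `k` with `q` elements, the number of alternating
`2n × 2n` matrices is `q^{n(2n−1)}`, and the number of invertible ones is
`q^{n(2n−1)} · ∏_{i=1}^{n} (1 − q^{1−2i})` (equivalently, that product is the proportion of
alternating matrices that are invertible). -/
theorem stmt7 {k : Type} [Field k] [Fintype k] (n : ℕ) (hn : 1 ≤ n) :
    Nat.card {A : Matrix (Fin (2 * n)) (Fin (2 * n)) k //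
        A.transpose = -A ∧ ∀ i, A i i = 0}
      = Fintype.card k ^ (n * (2 * n - 1)) ∧
    (Nat.card {A : Matrix (Fin (2 * n)) (Fin (2 * n)) k //
        (A.transpose = -A ∧ ∀ i, A i i = 0) ∧ A.det ≠ 0} : ℚ)
      = (Fintype.card k : ℚ) ^ (n * (2 * n - 1)) *
        ∏ i ∈ Finset.range n, (1 - (Fintype.card k : ℚ) ^ (1 - 2 * ((i : ℤ) + 1))) :=
  stmt7_general n
end
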